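/- arXiv:0908.0162 — 5 statements merged into one kernel-verified Lean document; each statement's English description precedes it below -/
import Mathlib

section
/- Let T>0, m>0 and d≥1. For all functions x,y ∈ C⁴([0,T],ℝᵈ) such that x(0)=x(T)=0, y(0)=y(T)=0, m·y''(0)=y'(0) and m·y''(T)=−y'(T), one has ∫₀ᵀ ⟨x(t), −m²y''''(t)+y''(t)⟩ dt = −m² ∫₀ᵀ ⟨x''(t),y''(t)⟩ dt − ∫₀ᵀ ⟨x'(t),y'(t)⟩ dt − m(⟨x'(0),y'(0)⟩ + ⟨x'(T),y'(T)⟩). In particular, if x additionally satisfies m·x''(0)=x'(0) and m·x''(T)=−x'(T), then the expression is symmetric in x and y, and ∫₀ᵀ ⟨x(t), −m²x''''(t)+x''(t)⟩ dt ≤ 0. -/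
/-!
Integrate by parts twice against `y''''` and once against `y''`. The boundary terms carrying
`x(a) = x(b) = 0` vanish, and the remaining ones, `∓ m² ⟨x', y''⟩` at `a` and `b`, both become
`-m ⟨x', y'⟩` by the Robin-type conditions `m y''(a) = y'(a)`, `m y''(b) = -y'(b)`. Hence
`∫ ⟨x, L y⟩ = -energyForm m a b x y`, a symmetric form that is nonnegative on the diagonal
when `m ≥ 0` and `a ≤ b`.
-/

open scoped RealInnerProductSpace
open intervalIntegral

variable {E : Type*} [NormedAddCommGroup E] [InnerProductSpace ℝ E]

theorem integral_inner_deriv_right_eq_sub {u v u' v' : ℝ → E} (a b : ℝ)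
    (hu : ∀ t, HasDerivAt u (u' t) t) (hv : ∀ t, HasDerivAt v (v' t) t)
    (hu' : Continuous u') (hv' : Continuous v') :
    ∫ t in a..b, ⟪u t, v' t⟫ = ⟪u b, v b⟫ - ⟪u a, v a⟫ - ∫ t in a..b, ⟪u' t, v t⟫ := by
  have hcu : Continuous u := continuous_iff_continuousAt.2 fun t => (hu t).continuousAt
  have hcv : Continuous v := continuous_iff_continuousAt.2 fun t => (hv t).continuousAt
  have hFTC := integral_eq_sub_of_hasDerivAt (fun t _ => (hu t).inner ℝ (hv t))
    (((hcu.inner hv').add (hu'.inner hcv)).intervalIntegrable a b)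
  rw [integral_add ((hcu.inner hv').intervalIntegrable a b)
    ((hu'.inner hcv).intervalIntegrable a b)] at hFTC
  linarith

theorem ContDiff.hasDerivAt_iteratedDeriv {n : WithTop ℕ∞} {f : ℝ → E} (hf : ContDiff ℝ n f)
    {j : ℕ} (hj : j < n) (t : ℝ) : HasDerivAt (iteratedDeriv j f) (iteratedDeriv (j + 1) f t) t := by
  rw [iteratedDeriv_succ]
  exact (hf.differentiable_iteratedDeriv j hj t).hasDerivAt

theorem integral_inner_iteratedDeriv_succ_right {n : WithTop ℕ∞} {x y : ℝ → E}
    (hx : ContDiff ℝ n x) (hy : ContDiff ℝ n y) {k l : ℕ} (hk : k < n) (hl : l < n) (a b : ℝ) :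
    ∫ t in a..b, ⟪iteratedDeriv k x t, iteratedDeriv (l + 1) y t⟫ =
      ⟪iteratedDeriv k x b, iteratedDeriv l y b⟫ - ⟪iteratedDeriv k x a, iteratedDeriv l y a⟫ -
        ∫ t in a..b, ⟪iteratedDeriv (k + 1) x t, iteratedDeriv l y t⟫ := by
  exact integral_inner_deriv_right_eq_sub a b (hx.hasDerivAt_iteratedDeriv hk)
    (hy.hasDerivAt_iteratedDeriv hl)
    (hx.continuous_iteratedDeriv _ (ENat.add_one_natCast_le_withTop_of_lt hk))
    (hy.continuous_iteratedDeriv _ (ENat.add_one_natCast_le_withTop_of_lt hl))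

noncomputable def energyForm (m a b : ℝ) (x y : ℝ → E) : ℝ :=
  m ^ 2 * (∫ t in a..b, ⟪iteratedDeriv 2 x t, iteratedDeriv 2 y t⟫) +
    (∫ t in a..b, ⟪deriv x t, deriv y t⟫) + m * (⟪deriv x a, deriv y a⟫ + ⟪deriv x b, deriv y b⟫)

theorem energyForm_comm (m a b : ℝ) (x y : ℝ → E) :
    energyForm m a b x y = energyForm m a b y x := by
  simp only [energyForm, real_inner_comm (iteratedDeriv 2 x _), real_inner_comm (deriv x _)]

theorem energyForm_self_nonneg {m a b : ℝ} (hm : 0 ≤ m) (hab : a ≤ b) (x : ℝ → E) :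
    0 ≤ energyForm m a b x x := by
  have hinner : ∀ f : ℝ → E, 0 ≤ ∫ t in a..b, ⟪f t, f t⟫ :=
    fun f => integral_nonneg hab fun t _ => real_inner_self_nonneg
  have hboundary : 0 ≤ ⟪deriv x a, deriv x a⟫ + ⟪deriv x b, deriv x b⟫ :=
    add_nonneg real_inner_self_nonneg real_inner_self_nonneg
  exact add_nonneg (add_nonneg (mul_nonneg (sq_nonneg m) (hinner _)) (hinner _))
    (mul_nonneg hm hboundary)

theorem integral_inner_eq_neg_energyForm {m a b : ℝ} {x y : ℝ → E}
    (hx : ContDiff ℝ 4 x) (hy : ContDiff ℝ 4 y) (hxa : x a = 0) (hxb : x b = 0)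
    (hya : m • iteratedDeriv 2 y a = deriv y a) (hyb : m • iteratedDeriv 2 y b = -deriv y b) :
    ∫ t in a..b, ⟪x t, -(m ^ 2) • iteratedDeriv 4 y t + iteratedDeriv 2 y t⟫ =
      -energyForm m a b x y := by
  have ibp (k l : ℕ) (hk : k < 4) (hl : l < 4) :=
    integral_inner_iteratedDeriv_succ_right hx hy (by exact_mod_cast hk) (by exact_mod_cast hl) a b
  have ibp_fourth := ibp 0 3 (by norm_num) (by norm_num)
  have ibp_third := ibp 1 2 (by norm_num) (by norm_num)
  have ibp_second := ibp 0 1 (by norm_num) (by norm_num)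
  simp only [iteratedDeriv_zero, iteratedDeriv_one, hxa, hxb, inner_zero_left, Nat.reduceAdd]
    at ibp_fourth ibp_third ibp_second
  have hsplit : ∫ t in a..b, ⟪x t, -(m ^ 2) • iteratedDeriv 4 y t + iteratedDeriv 2 y t⟫ =
      -(m ^ 2) * (∫ t in a..b, ⟪x t, iteratedDeriv 4 y t⟫) +
        ∫ t in a..b, ⟪x t, iteratedDeriv 2 y t⟫ := by
    have hx0 := hx.continuous
    have hy4 := hy.continuous_iteratedDeriv 4 le_rfl
    have hy2 := hy.continuous_iteratedDeriv 2 (by norm_num)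
    simp only [inner_add_right, real_inner_smul_right]
    rw [integral_add, integral_const_mul] <;> apply Continuous.intervalIntegrable <;>
      fun_prop
  have hbdry_a : m * ⟪deriv x a, iteratedDeriv 2 y a⟫ = ⟪deriv x a, deriv y a⟫ := by
    rw [← real_inner_smul_right, hya]
  have hbdry_b : m * ⟪deriv x b, iteratedDeriv 2 y b⟫ = -⟪deriv x b, deriv y b⟫ := by
    rw [← real_inner_smul_right, hyb, inner_neg_right]
  rw [hsplit, energyForm]
  linear_combination
    -(m ^ 2) * ibp_fourth + m ^ 2 * ibp_third + ibp_second + m * hbdry_b - m * hbdry_a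

theorem stmt0_general (T m : ℝ) (hT : 0 < T) (hm : 0 < m) (d : ℕ)
    (x y : ℝ → EuclideanSpace ℝ (Fin d))
    (hx : ContDiff ℝ 4 x) (hy : ContDiff ℝ 4 y)
    (hx0 : x 0 = 0) (hxT : x T = 0) (hy0 : y 0 = 0) (hyT : y T = 0)
    (hy0' : m • iteratedDeriv 2 y 0 = deriv y 0)
    (hyT' : m • iteratedDeriv 2 y T = -deriv y T) :
    (∫ t in (0:ℝ)..T, ⟪x t, -(m ^ 2) • iteratedDeriv 4 y t + iteratedDeriv 2 y t⟫)
      = -(m ^ 2) * (∫ t in (0:ℝ)..T, ⟪iteratedDeriv 2 x t, iteratedDeriv 2 y t⟫)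
        - (∫ t in (0:ℝ)..T, ⟪deriv x t, deriv y t⟫)
        - m * (⟪deriv x 0, deriv y 0⟫ + ⟪deriv x T, deriv y T⟫)
    ∧ ((m • iteratedDeriv 2 x 0 = deriv x 0 ∧ m • iteratedDeriv 2 x T = -deriv x T) →
        ((∫ t in (0:ℝ)..T, ⟪x t, -(m ^ 2) • iteratedDeriv 4 y t + iteratedDeriv 2 y t⟫)
            = (∫ t in (0:ℝ)..T, ⟪y t, -(m ^ 2) • iteratedDeriv 4 x t + iteratedDeriv 2 x t⟫)
          ∧ (∫ t in (0:ℝ)..T, ⟪x t, -(m ^ 2) • iteratedDeriv 4 x t + iteratedDeriv 2 x t⟫) ≤ 0)) := by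
  have hxy := integral_inner_eq_neg_energyForm hx hy hx0 hxT hy0' hyT'
  refine ⟨by rw [hxy, energyForm]; ring, fun ⟨hx0', hxT'⟩ => ⟨?_, ?_⟩⟩
  · rw [hxy, integral_inner_eq_neg_energyForm hy hx hy0 hyT hx0' hxT', energyForm_comm]
  · rw [integral_inner_eq_neg_energyForm hx hx hx0 hxT hx0' hxT', neg_nonpos]
    exact energyForm_self_nonneg hm.le hT.le x

/-- Integration by parts identity for the fourth-order operator
`L = -m²∂t⁴ + ∂t²` with the boundary conditions of the sampling SPDE,
showing that `L` is symmetric and negative. -/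
theorem stmt0 (T m : ℝ) (hT : 0 < T) (hm : 0 < m) (d : ℕ) (hd : 1 ≤ d)
    (x y : ℝ → EuclideanSpace ℝ (Fin d))
    (hx : ContDiff ℝ 4 x) (hy : ContDiff ℝ 4 y)
    (hx0 : x 0 = 0) (hxT : x T = 0) (hy0 : y 0 = 0) (hyT : y T = 0)
    (hy0' : m • iteratedDeriv 2 y 0 = deriv y 0)
    (hyT' : m • iteratedDeriv 2 y T = -deriv y T) :
    (∫ t in (0:ℝ)..T, ⟪x t, -(m ^ 2) • iteratedDeriv 4 y t + iteratedDeriv 2 y t⟫)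
      = -(m ^ 2) * (∫ t in (0:ℝ)..T, ⟪iteratedDeriv 2 x t, iteratedDeriv 2 y t⟫)
        - (∫ t in (0:ℝ)..T, ⟪deriv x t, deriv y t⟫)
        - m * (⟪deriv x 0, deriv y 0⟫ + ⟪deriv x T, deriv y T⟫)
    ∧ ((m • iteratedDeriv 2 x 0 = deriv x 0 ∧ m • iteratedDeriv 2 x T = -deriv x T) →
        ((∫ t in (0:ℝ)..T, ⟪x t, -(m ^ 2) • iteratedDeriv 4 y t + iteratedDeriv 2 y t⟫)
            = (∫ t in (0:ℝ)..T, ⟪y t, -(m ^ 2) • iteratedDeriv 4 x t + iteratedDeriv 2 x t⟫)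
          ∧ (∫ t in (0:ℝ)..T, ⟪x t, -(m ^ 2) • iteratedDeriv 4 x t + iteratedDeriv 2 x t⟫) ≤ 0)) :=
  stmt0_general T m hT hm d x y hx hy hx0 hxT hy0 hyT hy0' hyT'
end

section
/- Let α ∈ (0,1) and n ≥ 1. There is the uniform bound: for every continuously differentiable x:[0,π]→ℝ with x(0)=x(π)=0 whose derivative is α-Hölder continuous, the trigonometric polynomial (Π̂⁰_n x)(t) = ∑_{k=1}^{n} ((n−k)/n)·(∫₀^π x(s)·sin(ks) ds)·sin(kt) satisfies ‖Π̂⁰_n x‖_{C^{1+α}} ≤ 2π·‖x‖_{C^{1+α}}. -/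
/-!
With the Fejér kernel `F_n(u) = 1 + 2 ∑_{k=1}^n (1 - k/n) cos (k u)`, the product-to-sum formulas
give `Π̂⁰_n x (t) = ¼ ∫₀^π x(s) (F_n(t-s) - F_n(t+s)) ds`, and an integration by parts (using
`x 0 = x π = 0`) gives `(Π̂⁰_n x)'(t) = ¼ ∫₀^π x'(s) (F_n(t-s) + F_n(t+s) - 2) ds`.
Since `n F_n(u) = |∑_{j<n} e^{iju}|² ≥ 0` and `∫_{-π}^{π} F_n = 2π`, both integrals are bounded by
`π` times the sup norm of `x`, resp. `x'`. Replacing `x'` by its even `2π`-periodic extension `e`,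
which has the same Hölder constant, the derivative becomes `¼ (e ⋆ F_n)(t)` up to an additive
constant, and convolution with a nonnegative kernel of mass `2π` multiplies Hölder constants by at
most `2π`.
-/

open Real

/-- The `C^{1+α}` norm of a function on `[0,T]`:
`sup |x| + sup |x'| + sup_{s ≠ t} |x'(t) - x'(s)| / |t-s|^α`. -/
noncomputable def C1alphaNorm (T α : ℝ) (x : ℝ → ℝ) : ℝ :=
  (⨆ t : Set.Icc (0:ℝ) T, |x t|) + (⨆ t : Set.Icc (0:ℝ) T, |deriv x t|) +
    ⨆ p : Set.Icc (0:ℝ) T × Set.Icc (0:ℝ) T,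
      if (p.1 : ℝ) = (p.2 : ℝ) then 0
      else |deriv x p.1 - deriv x p.2| / |(p.1 : ℝ) - (p.2 : ℝ)| ^ α

noncomputable def supNormIcc (T : ℝ) (f : ℝ → ℝ) : ℝ :=
  ⨆ t : Set.Icc (0 : ℝ) T, |f t|

noncomputable def holderSeminormIcc (T α : ℝ) (f : ℝ → ℝ) : ℝ :=
  ⨆ p : Set.Icc (0 : ℝ) T × Set.Icc (0 : ℝ) T,
    if (p.1 : ℝ) = (p.2 : ℝ) then 0 else |f p.1 - f p.2| / |(p.1 : ℝ) - (p.2 : ℝ)| ^ α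

lemma C1alphaNorm_eq (T α : ℝ) (x : ℝ → ℝ) :
    C1alphaNorm T α x
      = supNormIcc T x + supNormIcc T (deriv x) + holderSeminormIcc T α (deriv x) :=
  rfl

section IccNorms

variable {T : ℝ} {f : ℝ → ℝ}

lemma abs_le_supNormIcc (hf : ContinuousOn f (Set.Icc 0 T)) {t : ℝ} (ht : t ∈ Set.Icc 0 T) :
    |f t| ≤ supNormIcc T f := by
  obtain ⟨C, hC⟩ := isCompact_Icc.exists_bound_of_continuousOn hf
  exact le_ciSup ⟨C, by rintro _ ⟨s, rfl⟩; exact hC s s.2⟩ (⟨t, ht⟩ : Set.Icc 0 T)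

lemma supNormIcc_le (hT : 0 ≤ T) {A : ℝ} (h : ∀ t ∈ Set.Icc 0 T, |f t| ≤ A) :
    supNormIcc T f ≤ A :=
  have : Nonempty (Set.Icc 0 T) := ⟨⟨0, le_rfl, hT⟩⟩
  ciSup_le fun t => h t t.2

lemma holderSeminormIcc_le (hT : 0 ≤ T) {α C : ℝ} (hC : 0 ≤ C)
    (h : ∀ a ∈ Set.Icc 0 T, ∀ b ∈ Set.Icc 0 T, |f a - f b| ≤ C * |a - b| ^ α) :
    holderSeminormIcc T α f ≤ C := by
  have : Nonempty (Set.Icc 0 T) := ⟨⟨0, le_rfl, hT⟩⟩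
  refine ciSup_le fun p => ?_
  split_ifs with hp
  · exact hC
  · exact (div_le_iff₀ (rpow_pos_of_pos (abs_pos.mpr (sub_ne_zero.mpr hp)) α)).mpr
      (h _ p.1.2 _ p.2.2)

variable {K r : NNReal}

lemma bddAbove_holderQuotients (hf : HolderOnWith K r f (Set.Icc 0 T)) :
    BddAbove (Set.range fun p : Set.Icc (0 : ℝ) T × Set.Icc (0 : ℝ) T =>
      if (p.1 : ℝ) = (p.2 : ℝ) then 0
      else |f p.1 - f p.2| / |(p.1 : ℝ) - (p.2 : ℝ)| ^ (r : ℝ)) := by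
  refine ⟨K, ?_⟩
  rintro _ ⟨p, rfl⟩
  dsimp only
  split_ifs with hp
  · exact K.coe_nonneg
  · rw [div_le_iff₀ (rpow_pos_of_pos (abs_pos.mpr (sub_ne_zero.mpr hp)) _)]
    simpa only [Real.dist_eq] using hf.dist_le p.1.2 p.2.2

lemma holderSeminormIcc_nonneg (hf : HolderOnWith K r f (Set.Icc 0 T)) (hT : 0 ≤ T) :
    0 ≤ holderSeminormIcc T r f := by
  have h0 : (0 : ℝ) ∈ Set.Icc 0 T := ⟨le_rfl, hT⟩
  have h := le_ciSup (bddAbove_holderQuotients hf)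
    (⟨⟨0, h0⟩, ⟨0, h0⟩⟩ : Set.Icc 0 T × Set.Icc 0 T)
  rwa [if_pos rfl] at h

lemma abs_sub_le_holderSeminormIcc (hf : HolderOnWith K r f (Set.Icc 0 T)) {a b : ℝ}
    (ha : a ∈ Set.Icc 0 T) (hb : b ∈ Set.Icc 0 T) :
    |f a - f b| ≤ holderSeminormIcc T r f * |a - b| ^ (r : ℝ) := by
  by_cases hab : a = b
  · subst hab
    simpa using mul_nonneg (holderSeminormIcc_nonneg hf (ha.1.trans ha.2))
      (rpow_nonneg (abs_nonneg (a - a)) (r : ℝ))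
  · have hq := le_ciSup (bddAbove_holderQuotients hf)
      (⟨⟨a, ha⟩, ⟨b, hb⟩⟩ : Set.Icc 0 T × Set.Icc 0 T)
    rw [if_neg hab, div_le_iff₀ (rpow_pos_of_pos (abs_pos.mpr (sub_ne_zero.mpr hab)) _)] at hq
    exact hq

end IccNorms

open Finset intervalIntegral

noncomputable def fejerKernel (n : ℕ) (u : ℝ) : ℝ :=
  1 + 2 * ∑ k ∈ Icc 1 n, (((n : ℝ) - k) / n) * cos (k * u)

lemma sum_range_cos_mul_cos_add_sin_mul_sin (n : ℕ) (u : ℝ) :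
    ∑ j ∈ range n, (cos (j * u) * cos (n * u) + sin (j * u) * sin (n * u))
      = ∑ k ∈ Icc 1 n, cos (k * u) := by
  induction n with
  | zero => simp
  | succ n ih =>
    rw [sum_range_succ', sum_Icc_succ_top (by omega), ← ih]
    push_cast
    simp only [← cos_sub, zero_mul, cos_zero, sin_zero, one_mul, add_zero]
    congr 1
    exact sum_congr rfl fun j _ => by ring_nf

lemma sq_sum_cos_add_sq_sum_sin (n : ℕ) (u : ℝ) :
    (∑ j ∈ range n, cos (j * u)) ^ 2 + (∑ j ∈ range n, sin (j * u)) ^ 2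
      = n + 2 * ∑ k ∈ Icc 1 n, ((n : ℝ) - k) * cos (k * u) := by
  induction n with
  | zero => simp
  | succ n ih =>
    have hcross := sum_range_cos_mul_cos_add_sin_mul_sin n u
    rw [sum_add_distrib, ← sum_mul, ← sum_mul] at hcross
    rw [sum_range_succ, sum_range_succ, sum_Icc_succ_top (by omega)]
    push_cast
    have hweights : ∑ k ∈ Icc 1 n, ((n : ℝ) + 1 - k) * cos (k * u)
        = ∑ k ∈ Icc 1 n, ((n : ℝ) - k) * cos (k * u) + ∑ k ∈ Icc 1 n, cos (k * u) := by
      rw [← sum_add_distrib]; exact sum_congr rfl fun k _ => by ring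
    rw [hweights, ← hcross]
    nlinarith [sin_sq_add_cos_sq ((n : ℝ) * u)]

lemma natCast_mul_fejerKernel {n : ℕ} (hn : n ≠ 0) (u : ℝ) :
    n * fejerKernel n u
      = (∑ j ∈ range n, cos (j * u)) ^ 2 + (∑ j ∈ range n, sin (j * u)) ^ 2 := by
  have hn' : (n : ℝ) ≠ 0 := Nat.cast_ne_zero.mpr hn
  rw [sq_sum_cos_add_sq_sum_sin, fejerKernel, mul_add, mul_one, mul_sum, mul_sum, mul_sum]
  congr 1
  exact sum_congr rfl fun k _ => by field_simp

lemma fejerKernel_nonneg (n : ℕ) (u : ℝ) : 0 ≤ fejerKernel n u := by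
  rcases Nat.eq_zero_or_pos n with rfl | hn
  · simp [fejerKernel]
  · have h := natCast_mul_fejerKernel hn.ne' u
    have : 0 ≤ (n : ℝ) * fejerKernel n u := by rw [h]; positivity
    exact nonneg_of_mul_nonneg_right this (by exact_mod_cast hn)

lemma continuous_fejerKernel (n : ℕ) : Continuous (fejerKernel n) := by
  unfold fejerKernel; fun_prop

lemma fejerKernel_periodic (n : ℕ) : Function.Periodic (fejerKernel n) (2 * π) := by
  intro u
  simp only [fejerKernel, mul_add, cos_add_nat_mul_two_pi]

lemma integral_fejerKernel (n : ℕ) : ∫ u in -π..π, fejerKernel n u = 2 * π := by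
  have hcos : ∀ k ∈ Icc 1 n, ∫ u in -π..π, (((n : ℝ) - k) / n) * cos (k * u) = 0 := by
    intro k hk
    have hk : (k : ℝ) ≠ 0 := by have := (mem_Icc.mp hk).1; positivity
    rw [integral_const_mul, integral_comp_mul_left cos hk, integral_cos, mul_neg, sin_neg,
      sin_nat_mul_pi]
    simp
  have hint : ∀ k ∈ Icc 1 n, IntervalIntegrable (fun u => (((n : ℝ) - k) / n) * cos (k * u))
      MeasureTheory.volume (-π) π :=
    fun k _ => (by fun_prop : Continuous _).intervalIntegrable _ _
  unfold fejerKernel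
  rw [integral_add, integral_const_mul, integral_finsetSum hint, sum_eq_zero hcos, integral_const,
    smul_eq_mul]
  · ring
  · exact intervalIntegrable_const
  · exact (by fun_prop : Continuous fun u =>
      2 * ∑ k ∈ Icc 1 n, (((n : ℝ) - k) / n) * cos (k * u)).intervalIntegrable _ _

lemma sum_sin_mul_sin_eq_fejerKernel (n : ℕ) (t s : ℝ) :
    ∑ k ∈ Icc 1 n, (((n : ℝ) - k) / n) * sin (k * t) * sin (k * s)
      = (fejerKernel n (t - s) - fejerKernel n (t + s)) / 4 := by
  rw [fejerKernel, fejerKernel,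
    show ∀ a b : ℝ, (1 + 2 * a - (1 + 2 * b)) / 4 = (a - b) / 2 by intros; ring,
    ← sum_sub_distrib, sum_div]
  exact sum_congr rfl fun k _ => by rw [mul_sub, mul_add, cos_sub, cos_add]; ring

lemma sum_cos_mul_cos_eq_fejerKernel (n : ℕ) (t s : ℝ) :
    ∑ k ∈ Icc 1 n, (((n : ℝ) - k) / n) * cos (k * t) * cos (k * s)
      = (fejerKernel n (t - s) + fejerKernel n (t + s) - 2) / 4 := by
  rw [fejerKernel, fejerKernel,
    show ∀ a b : ℝ, (1 + 2 * a + (1 + 2 * b) - 2) / 4 = (a + b) / 2 by intros; ring,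
    ← sum_add_distrib, sum_div]
  exact sum_congr rfl fun k _ => by rw [mul_sub, mul_add, cos_sub, cos_add]; ring

lemma integral_even_mul_shifts_eq_convolution {e K : ℝ → ℝ} (he : Continuous e)
    (he_neg : ∀ v, e (-v) = e v) (he_per : Function.Periodic e (2 * π)) (hK : Continuous K)
    (hK_per : Function.Periodic K (2 * π)) (t : ℝ) :
    ∫ s in 0..π, e s * (K (t - s) + K (t + s)) = ∫ u in -π..π, e (t - u) * K u := by
  set h : ℝ → ℝ := fun u => e (t - u) * K u
  have h_per : Function.Periodic h (2 * π) := fun u => by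
    simp only [h, sub_add_eq_sub_sub, he_per.sub_eq, hK_per u]
  have hleft : ∫ s in 0..π, e s * K (t - s) = ∫ u in t - π..t, h u := by
    simpa only [h, sub_sub_cancel, sub_zero] using
      integral_comp_sub_left h t (a := 0) (b := π)
  have hright : ∫ s in 0..π, e s * K (t + s) = ∫ u in t..t + π, h u := by
    simpa only [h, sub_add_cancel_left, he_neg, add_zero, add_comm π] using
      integral_comp_add_left h t (a := 0) (b := π)
  have hint : ∀ f : ℝ → ℝ, Continuous f → ∀ a b, IntervalIntegrable f MeasureTheory.volume a b :=
    fun f hf => hf.intervalIntegrable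
  simp only [mul_add]
  rw [integral_add (hint _ (by fun_prop) _ _) (hint _ (by fun_prop) _ _), hleft, hright,
    integral_add_adjacent_intervals (hint _ (by fun_prop) _ _) (hint _ (by fun_prop) _ _)]
  simpa [two_mul, sub_add_eq_add_sub, ← add_assoc] using
    h_per.intervalIntegral_add_eq (t - π) (-π)

lemma integral_fejerKernel_sub_add (n : ℕ) (t : ℝ) :
    ∫ s in 0..π, (fejerKernel n (t - s) + fejerKernel n (t + s)) = 2 * π := by
  simpa [integral_fejerKernel] using
    integral_even_mul_shifts_eq_convolution (e := fun _ => 1) continuous_const (fun _ => rfl)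
      (fun _ => rfl) (continuous_fejerKernel n) (fejerKernel_periodic n) t

lemma abs_integral_mul_le_of_abs_le_fejerKernel {n : ℕ} {t M : ℝ} {f k : ℝ → ℝ}
    (hf : ∀ s ∈ Set.Icc 0 π, |f s| ≤ M)
    (hk : ∀ s, |k s| ≤ (fejerKernel n (t - s) + fejerKernel n (t + s) + 2) / 4) :
    |∫ s in 0..π, f s * k s| ≤ M * π := by
  have hM : 0 ≤ M := (abs_nonneg _).trans (hf 0 ⟨le_rfl, pi_pos.le⟩)
  have hF := continuous_fejerKernel n
  have hweight : ∫ s in 0..π, M * ((fejerKernel n (t - s) + fejerKernel n (t + s) + 2) / 4)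
      = M * π := by
    rw [integral_const_mul, integral_div,
      integral_add ((by fun_prop : Continuous fun s =>
        fejerKernel n (t - s) + fejerKernel n (t + s)).intervalIntegrable _ _)
        intervalIntegrable_const,
      integral_fejerKernel_sub_add, integral_const, sub_zero, smul_eq_mul]
    ring
  rw [← hweight, ← Real.norm_eq_abs]
  refine norm_integral_le_of_norm_le pi_pos.le
    (Filter.Eventually.of_forall fun s hs => ?_)
    ((by fun_prop : Continuous fun s =>
      M * ((fejerKernel n (t - s) + fejerKernel n (t + s) + 2) / 4)).intervalIntegrable _ _)
  rw [Real.norm_eq_abs, abs_mul]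
  exact mul_le_mul (hf s (Set.Ioc_subset_Icc_self hs)) (hk s) (abs_nonneg _) hM

lemma abs_integral_comp_sub_mul_fejerKernel_sub_le {n : ℕ} {e : ℝ → ℝ} (he : Continuous e)
    {t τ D : ℝ} (hD : ∀ u, |e (t - u) - e (τ - u)| ≤ D) :
    |(∫ u in -π..π, e (t - u) * fejerKernel n u) - ∫ u in -π..π, e (τ - u) * fejerKernel n u|
      ≤ 2 * π * D := by
  have hF := continuous_fejerKernel n
  have hint : ∀ a, IntervalIntegrable (fun u => e (a - u) * fejerKernel n u)
      MeasureTheory.volume (-π) π :=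
    fun a => (by fun_prop : Continuous _).intervalIntegrable _ _
  rw [← integral_sub (hint t) (hint τ), ← integral_fejerKernel n, mul_comm,
    ← integral_const_mul, ← Real.norm_eq_abs]
  refine norm_integral_le_of_norm_le (by linarith [pi_pos])
    (Filter.Eventually.of_forall fun u _ => ?_)
    ((by fun_prop : Continuous fun u => D * fejerKernel n u).intervalIntegrable _ _)
  rw [Real.norm_eq_abs, ← sub_mul, abs_mul, abs_of_nonneg (fejerKernel_nonneg n u)]
  exact mul_le_mul_of_nonneg_right (hD u) (fejerKernel_nonneg n u)

/-- `‖(v : AddCircle (2π))‖` is the distance from `v` to `2πℤ`, which folds `ℝ` onto `[0, π]`. -/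
noncomputable def evenPeriodicExt (f : ℝ → ℝ) (v : ℝ) : ℝ :=
  f ‖(v : AddCircle (2 * π))‖

section evenPeriodicExt

variable {f : ℝ → ℝ}

lemma norm_coe_addCircle_mem_Icc (v : ℝ) : ‖(v : AddCircle (2 * π))‖ ∈ Set.Icc 0 π := by
  refine ⟨norm_nonneg _, ?_⟩
  simpa [abs_of_pos pi_pos] using
    AddCircle.norm_le_half_period (p := 2 * π) (x := v) (by positivity)

lemma evenPeriodicExt_of_mem_Icc {v : ℝ} (hv : v ∈ Set.Icc 0 π) :
    evenPeriodicExt f v = f v := by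
  rw [evenPeriodicExt, (AddCircle.norm_coe_eq_abs_iff _ (by positivity)).mpr, abs_of_nonneg hv.1]
  rw [abs_of_nonneg hv.1, abs_of_pos (by positivity)]
  linarith [hv.2]

lemma evenPeriodicExt_neg (v : ℝ) : evenPeriodicExt f (-v) = evenPeriodicExt f v := by
  simp [evenPeriodicExt]

lemma evenPeriodicExt_periodic : Function.Periodic (evenPeriodicExt f) (2 * π) := by
  intro v
  simp [evenPeriodicExt]

lemma continuous_evenPeriodicExt (hf : ContinuousOn f (Set.Icc 0 π)) :
    Continuous (evenPeriodicExt f) :=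
  hf.comp_continuous (continuous_norm.comp continuous_quotient_mk') norm_coe_addCircle_mem_Icc

lemma abs_evenPeriodicExt_sub_le {C α : ℝ} (hC : 0 ≤ C) (hα : 0 ≤ α)
    (hf : ∀ a ∈ Set.Icc 0 π, ∀ b ∈ Set.Icc 0 π, |f a - f b| ≤ C * |a - b| ^ α) (a b : ℝ) :
    |evenPeriodicExt f a - evenPeriodicExt f b| ≤ C * |a - b| ^ α := by
  have hfold : |‖(a : AddCircle (2 * π))‖ - ‖(b : AddCircle (2 * π))‖| ≤ |a - b| := by
    refine (abs_norm_sub_norm_le _ _).trans ?_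
    rw [← AddCircle.coe_sub, ← Real.norm_eq_abs]
    exact QuotientAddGroup.norm_mk_le_norm
  exact (hf _ (norm_coe_addCircle_mem_Icc a) _ (norm_coe_addCircle_mem_Icc b)).trans
    (mul_le_mul_of_nonneg_left (rpow_le_rpow (abs_nonneg _) hfold hα) hC)

end evenPeriodicExt

lemma sum_mul_integral_mul_eq_integral_mul_sum {ι : Type*} (S : Finset ι) {f : ℝ → ℝ}
    {g : ι → ℝ → ℝ} (hf : Continuous f) (hg : ∀ i ∈ S, Continuous (g i)) (c : ι → ℝ)
    (a b : ℝ) :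
    ∑ i ∈ S, c i * ∫ s in a..b, f s * g i s = ∫ s in a..b, f s * ∑ i ∈ S, c i * g i s := by
  simp only [mul_sum]
  rw [integral_finsetSum fun i hi => (by have := hg i hi; fun_prop :
    Continuous fun s => f s * (c i * g i s)).intervalIntegrable a b]
  exact sum_congr rfl fun i _ => by rw [← integral_const_mul]; simp only [mul_left_comm]

lemma mul_integral_mul_sin_eq_integral_deriv_mul_cos {x : ℝ → ℝ} {a b : ℝ}
    (hx : ContDiff ℝ 1 x) (hxa : x a = 0) (hxb : x b = 0) {k : ℝ} (hk : k ≠ 0) :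
    k * ∫ s in a..b, x s * sin (k * s) = ∫ s in a..b, deriv x s * cos (k * s) := by
  have hsin : ∀ s ∈ Set.uIcc a b, HasDerivAt (fun s => -cos (k * s) / k) (sin (k * s)) s := by
    intro s _
    have h : HasDerivAt (fun s => -cos (k * s) / k) (-(-sin (k * s) * (k * 1)) / k) s :=
      (((hasDerivAt_id s).const_mul k).cos.neg).div_const k
    exact h.congr_deriv (by field_simp)
  have := integral_mul_deriv_eq_deriv_mul
    (fun s _ => ((hx.differentiable one_ne_zero) s).hasDerivAt) hsin
    ((hx.continuous_deriv le_rfl).intervalIntegrable _ _)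
    ((by fun_prop : Continuous fun s => sin (k * s)).intervalIntegrable _ _)
  rw [this, hxa, hxb, zero_mul, zero_mul, sub_zero, zero_sub, mul_neg,
    ← integral_const_mul, ← integral_neg]
  exact integral_congr fun s _ => by field_simp

noncomputable def smoothedSineProj (n : ℕ) (x : ℝ → ℝ) (t : ℝ) : ℝ :=
  ∑ k ∈ Icc 1 n, (((n : ℝ) - k) / n) * (∫ s in 0..π, x s * sin (k * s)) * sin (k * t)

lemma hasDerivAt_smoothedSineProj (n : ℕ) (x : ℝ → ℝ) (t : ℝ) :
    HasDerivAt (smoothedSineProj n x) (∑ k ∈ Icc 1 n,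
      (((n : ℝ) - k) / n) * (∫ s in 0..π, x s * sin (k * s)) * (k * cos (k * t))) t := by
  refine HasDerivAt.fun_sum fun k _ => HasDerivAt.const_mul _ ?_
  simpa [mul_comm] using ((hasDerivAt_id t).const_mul (k : ℝ)).sin

section smoothedSineProj

variable {n : ℕ} {x : ℝ → ℝ}

lemma smoothedSineProj_eq_integral (hx : Continuous x) (t : ℝ) :
    smoothedSineProj n x t
      = ∫ s in 0..π, x s * ((fejerKernel n (t - s) - fejerKernel n (t + s)) / 4) := by
  simp only [smoothedSineProj, ← sum_sin_mul_sin_eq_fejerKernel]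
  rw [← sum_mul_integral_mul_eq_integral_mul_sum _ hx
    (fun k _ => by fun_prop) (fun k : ℕ => ((n : ℝ) - k) / n * sin (k * t))]
  exact sum_congr rfl fun k _ => by ring

lemma deriv_smoothedSineProj_eq_integral (hx : ContDiff ℝ 1 x) (hx0 : x 0 = 0)
    (hxπ : x π = 0) (t : ℝ) :
    deriv (smoothedSineProj n x) t
      = ∫ s in 0..π, deriv x s * ((fejerKernel n (t - s) + fejerKernel n (t + s) - 2) / 4) := by
  simp only [(hasDerivAt_smoothedSineProj n x t).deriv, ← sum_cos_mul_cos_eq_fejerKernel]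
  rw [← sum_mul_integral_mul_eq_integral_mul_sum _ (hx.continuous_deriv le_rfl)
    (fun k _ => by fun_prop) (fun k : ℕ => ((n : ℝ) - k) / n * cos (k * t))]
  refine sum_congr rfl fun k hk => ?_
  have hk : (k : ℝ) ≠ 0 := by have := (mem_Icc.mp hk).1; positivity
  rw [← mul_integral_mul_sin_eq_integral_deriv_mul_cos hx hx0 hxπ hk]
  ring

lemma abs_smoothedSineProj_le (hx : Continuous x) {M : ℝ}
    (hM : ∀ s ∈ Set.Icc 0 π, |x s| ≤ M) (t : ℝ) : |smoothedSineProj n x t| ≤ M * π := by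
  rw [smoothedSineProj_eq_integral hx]
  refine abs_integral_mul_le_of_abs_le_fejerKernel (n := n) (t := t) hM fun s => ?_
  have := fejerKernel_nonneg n (t - s)
  have := fejerKernel_nonneg n (t + s)
  rw [abs_le]; constructor <;> linarith

lemma abs_deriv_smoothedSineProj_le (hx : ContDiff ℝ 1 x) (hx0 : x 0 = 0) (hxπ : x π = 0)
    {M : ℝ} (hM : ∀ s ∈ Set.Icc 0 π, |deriv x s| ≤ M) (t : ℝ) :
    |deriv (smoothedSineProj n x) t| ≤ M * π := by
  rw [deriv_smoothedSineProj_eq_integral hx hx0 hxπ]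
  refine abs_integral_mul_le_of_abs_le_fejerKernel (n := n) (t := t) hM fun s => ?_
  have := fejerKernel_nonneg n (t - s)
  have := fejerKernel_nonneg n (t + s)
  rw [abs_le]; constructor <;> linarith

lemma deriv_smoothedSineProj_eq_convolution (hx : ContDiff ℝ 1 x) (hx0 : x 0 = 0)
    (hxπ : x π = 0) (t : ℝ) :
    deriv (smoothedSineProj n x) t
      = (∫ u in -π..π, evenPeriodicExt (deriv x) (t - u) * fejerKernel n u) / 4
        - (∫ s in 0..π, evenPeriodicExt (deriv x) s) / 2 := by
  set e := evenPeriodicExt (deriv x)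
  have he : Continuous e := continuous_evenPeriodicExt (hx.continuous_deriv le_rfl).continuousOn
  have hF := continuous_fejerKernel n
  rw [deriv_smoothedSineProj_eq_integral hx hx0 hxπ,
    ← integral_even_mul_shifts_eq_convolution he evenPeriodicExt_neg evenPeriodicExt_periodic hF
      (fejerKernel_periodic n), ← integral_div, ← integral_div,
    ← integral_sub (Continuous.intervalIntegrable (by fun_prop) _ _)
      (Continuous.intervalIntegrable (by fun_prop) _ _)]
  refine integral_congr fun s hs => ?_
  rw [Set.uIcc_of_le pi_pos.le] at hs
  simp only [e, evenPeriodicExt_of_mem_Icc hs]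
  ring

lemma abs_deriv_smoothedSineProj_sub_le (hx : ContDiff ℝ 1 x) (hx0 : x 0 = 0)
    (hxπ : x π = 0) {C α : ℝ} (hC : 0 ≤ C) (hα : 0 ≤ α)
    (hH : ∀ a ∈ Set.Icc 0 π, ∀ b ∈ Set.Icc 0 π, |deriv x a - deriv x b| ≤ C * |a - b| ^ α)
    (t τ : ℝ) :
    |deriv (smoothedSineProj n x) t - deriv (smoothedSineProj n x) τ|
      ≤ π / 2 * (C * |t - τ| ^ α) := by
  have he : Continuous (evenPeriodicExt (deriv x)) :=
    continuous_evenPeriodicExt (hx.continuous_deriv le_rfl).continuousOn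
  have hconv := abs_integral_comp_sub_mul_fejerKernel_sub_le (n := n) he (t := t) (τ := τ)
    fun u => by
      simpa only [sub_sub_sub_cancel_right] using
        abs_evenPeriodicExt_sub_le hC hα hH (t - u) (τ - u)
  rw [deriv_smoothedSineProj_eq_convolution hx hx0 hxπ,
    deriv_smoothedSineProj_eq_convolution hx hx0 hxπ, sub_sub_sub_cancel_right, ← sub_div,
    abs_div, abs_of_pos (four_pos : (0 : ℝ) < 4)]
  linarith

lemma C1alphaNorm_smoothedSineProj_le (hx : ContDiff ℝ 1 x) (hx0 : x 0 = 0)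
    (hxπ : x π = 0) {A B C α : ℝ} (hA : ∀ s ∈ Set.Icc 0 π, |x s| ≤ A)
    (hB : ∀ s ∈ Set.Icc 0 π, |deriv x s| ≤ B) (hC : 0 ≤ C) (hα : 0 ≤ α)
    (hH : ∀ a ∈ Set.Icc 0 π, ∀ b ∈ Set.Icc 0 π, |deriv x a - deriv x b| ≤ C * |a - b| ^ α) :
    C1alphaNorm π α (smoothedSineProj n x) ≤ A * π + B * π + π / 2 * C := by
  rw [C1alphaNorm_eq]
  exact add_le_add_three
    (supNormIcc_le pi_pos.le fun t _ => abs_smoothedSineProj_le hx.continuous hA t)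
    (supNormIcc_le pi_pos.le fun t _ => abs_deriv_smoothedSineProj_le hx hx0 hxπ hB t)
    (holderSeminormIcc_le pi_pos.le (by positivity) fun a _ b _ =>
      (abs_deriv_smoothedSineProj_sub_le hx hx0 hxπ hC hα hH a b).trans_eq
        (mul_assoc _ _ _).symm)

end smoothedSineProj

theorem stmt2_general (α : ℝ) (hα0 : 0 < α) (n : ℕ)
    (x : ℝ → ℝ) (hx : ContDiff ℝ 1 x) (hx0 : x 0 = 0) (hxpi : x π = 0)
    (hH : ∃ K : NNReal, HolderOnWith K ⟨α, hα0.le⟩ (deriv x) (Set.Icc 0 π)) :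
    C1alphaNorm π α
        (fun t => ∑ k ∈ Finset.Icc 1 n,
          (((n : ℝ) - k) / n) * (∫ s in (0:ℝ)..π, x s * Real.sin (k * s)) * Real.sin (k * t))
      ≤ 2 * π * C1alphaNorm π α x := by
  obtain ⟨K, hK⟩ := hH
  have hπ : 0 ≤ π := pi_pos.le
  set S₀ := supNormIcc π x
  set S₁ := supNormIcc π (deriv x)
  set S₂ := holderSeminormIcc π α (deriv x)
  have hS₀ : ∀ s ∈ Set.Icc 0 π, |x s| ≤ S₀ := fun s =>
    abs_le_supNormIcc hx.continuous.continuousOn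
  have hS₁ : ∀ s ∈ Set.Icc 0 π, |deriv x s| ≤ S₁ := fun s =>
    abs_le_supNormIcc (hx.continuous_deriv le_rfl).continuousOn
  have hS₂ : ∀ a ∈ Set.Icc 0 π, ∀ b ∈ Set.Icc 0 π, |deriv x a - deriv x b| ≤ S₂ * |a - b| ^ α :=
    fun a ha b hb => abs_sub_le_holderSeminormIcc hK ha hb
  have hS₀_nonneg : 0 ≤ S₀ := (abs_nonneg _).trans (hS₀ 0 ⟨le_rfl, hπ⟩)
  have hS₁_nonneg : 0 ≤ S₁ := (abs_nonneg _).trans (hS₁ 0 ⟨le_rfl, hπ⟩)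
  have hS₂_nonneg : 0 ≤ S₂ := holderSeminormIcc_nonneg hK hπ
  calc C1alphaNorm π α (smoothedSineProj n x)
      ≤ S₀ * π + S₁ * π + π / 2 * S₂ :=
        C1alphaNorm_smoothedSineProj_le hx hx0 hxpi hS₀ hS₁ hS₂_nonneg hα0.le hS₂
    _ ≤ 2 * π * (S₀ + S₁ + S₂) := by nlinarith

/-- The smoothed projections `Π̂⁰_n` onto the first `n` sine modes are
uniformly bounded on `C^{1+α}_0([0,π])` with norm at most `2π`. -/
theorem stmt2 (α : ℝ) (hα0 : 0 < α) (hα1 : α < 1) (n : ℕ) (hn : 1 ≤ n)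
    (x : ℝ → ℝ) (hx : ContDiff ℝ 1 x) (hx0 : x 0 = 0) (hxpi : x π = 0)
    (hH : ∃ K : NNReal, HolderOnWith K ⟨α, hα0.le⟩ (deriv x) (Set.Icc 0 π)) :
    C1alphaNorm π α
        (fun t => ∑ k ∈ Finset.Icc 1 n,
          (((n : ℝ) - k) / n) * (∫ s in (0:ℝ)..π, x s * Real.sin (k * s)) * Real.sin (k * t))
      ≤ 2 * π * C1alphaNorm π α x :=
  stmt2_general α hα0 n x hx hx0 hxpi hH
end

section
/- Let s ∈ (0, 1/2). Define the infinite matrix Â by Â_{mn} = m·n^{−2} if n ≥ m and Â_{mn} = m^{s−1}·n^{−s} if m > n (for m,n ≥ 1; the two formulas agree when m = n). Then Â defines a bounded operator on ℓ²: there exists C > 0 such that for every finitely supported sequence (x_n)_{n≥1} of nonnegative reals, ∑_{m≥1} ( ∑_{n≥1} Â_{mn} x_n )² ≤ C · ∑_{n≥1} x_n². -/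
/-!
Schur test with the weight `w n = (n + 1) ^ (-1/2)` on both sides: it suffices that the
weighted row sums `∑ₙ Â_{mn} w n` and column sums `∑ₘ Â_{mn} w m` are `O(w m)` and `O(w n)`.
Each splits at the diagonal into power sums `∑_{n<m} (n+1)^(c-1) ≲ m^c / c` and
`∑_{n≥m} (n+1)^(-(c+1)) ≲ (m+1)^(-c) / c`, compared with integrals by the mean value theorem;
the exponents that occur are `c = 3/2` and `c = 1/2 - s`, which is where `s < 1/2` enters.
-/

open Real Finset

theorem schur_test {ι κ : Type*} {A : ι → κ → ℝ} {p : κ → ℝ} {q : ι → ℝ} {α β : ℝ}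
    {M : Finset ι} {F : Finset κ} (hA : ∀ m ∈ M, ∀ n ∈ F, 0 ≤ A m n) (hp : ∀ n ∈ F, 0 < p n)
    (hα : 0 ≤ α) (hrow : ∀ m ∈ M, ∑ n ∈ F, A m n * p n ≤ α * q m)
    (hcol : ∀ n ∈ F, ∑ m ∈ M, A m n * q m ≤ β * p n) (x : κ → ℝ) :
    ∑ m ∈ M, (∑ n ∈ F, A m n * x n) ^ 2 ≤ α * β * ∑ n ∈ F, x n ^ 2 := by
  have hx : ∀ n ∈ F, 0 ≤ x n ^ 2 / p n := fun n hn => div_nonneg (sq_nonneg _) (hp n hn).le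
  have hCS : ∀ m ∈ M, (∑ n ∈ F, A m n * x n) ^ 2
      ≤ α * q m * ∑ n ∈ F, A m n * (x n ^ 2 / p n) := by
    intro m hm
    have hA' := hA m hm
    calc (∑ n ∈ F, A m n * x n) ^ 2
        ≤ (∑ n ∈ F, A m n * p n) * ∑ n ∈ F, A m n * (x n ^ 2 / p n) :=
          sum_sq_le_sum_mul_sum_of_sq_le_mul F
            (fun n hn => mul_nonneg (hA' n hn) (hp n hn).le)
            (fun n hn => mul_nonneg (hA' n hn) (hx n hn))
            (fun n hn => by field_simp [(hp n hn).ne']; rfl)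
      _ ≤ α * q m * ∑ n ∈ F, A m n * (x n ^ 2 / p n) :=
          mul_le_mul_of_nonneg_right (hrow m hm)
            (sum_nonneg fun n hn => mul_nonneg (hA' n hn) (hx n hn))
  calc ∑ m ∈ M, (∑ n ∈ F, A m n * x n) ^ 2
      ≤ ∑ m ∈ M, α * q m * ∑ n ∈ F, A m n * (x n ^ 2 / p n) := sum_le_sum hCS
    _ = α * ∑ n ∈ F, x n ^ 2 / p n * ∑ m ∈ M, A m n * q m := by
        simp only [mul_sum]
        rw [sum_comm]
        exact sum_congr rfl fun n _ => sum_congr rfl fun m _ => by ring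
    _ ≤ α * ∑ n ∈ F, x n ^ 2 / p n * (β * p n) := by
        gcongr with n hn
        · exact hx n hn
        · exact hcol n hn
    _ = α * β * ∑ n ∈ F, x n ^ 2 := by
        simp only [mul_sum]
        exact sum_congr rfl fun n hn => by field_simp [(hp n hn).ne']

theorem exists_rpow_add_one_sub_rpow_eq {x e : ℝ} (hx : 0 ≤ x) (h : 0 < x ∨ 0 ≤ e) :
    ∃ ξ ∈ Set.Ioo x (x + 1), (x + 1) ^ e - x ^ e = e * ξ ^ (e - 1) := by
  have hcont : ContinuousOn (fun t : ℝ => t ^ e) (Set.Icc x (x + 1)) := fun t ht =>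
    (continuousAt_rpow_const t e (h.imp (fun hx => (hx.trans_le ht.1).ne') id)).continuousWithinAt
  obtain ⟨ξ, hξ, hslope⟩ := exists_hasDerivAt_eq_slope (fun t => t ^ e) (fun t => e * t ^ (e - 1))
    (lt_add_one x) hcont fun t ht => hasDerivAt_rpow_const (Or.inl (hx.trans_lt ht.1).ne')
  exact ⟨ξ, hξ, by simpa using hslope.symm⟩

theorem mul_rpow_sub_one_le_rpow_add_one_sub_rpow {x e : ℝ} (hx : 0 ≤ x) (he₀ : 0 ≤ e)
    (he₁ : e ≤ 1) : e * (x + 1) ^ (e - 1) ≤ (x + 1) ^ e - x ^ e := by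
  obtain ⟨ξ, hξ, hmvt⟩ := exists_rpow_add_one_sub_rpow_eq hx (Or.inr he₀)
  rw [hmvt]
  exact mul_le_mul_of_nonneg_left
    (rpow_le_rpow_of_nonpos (hx.trans_lt hξ.1) hξ.2.le (by linarith)) he₀

theorem rpow_add_one_sub_rpow_le_mul_rpow_sub_one {x e : ℝ} (hx : 0 < x) (he : e ≤ 0) :
    (x + 1) ^ e - x ^ e ≤ e * (x + 1) ^ (e - 1) := by
  obtain ⟨ξ, hξ, hmvt⟩ := exists_rpow_add_one_sub_rpow_eq hx.le (Or.inl hx)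
  rw [hmvt]
  exact mul_le_mul_of_nonpos_left
    (rpow_le_rpow_of_nonpos (hx.trans hξ.1) hξ.2.le (by linarith)) he

theorem sum_add_one_rpow_sub_one_le {c : ℝ} (hc₀ : 0 < c) (hc₁ : c ≤ 1) {m : ℕ}
    {F : Finset ℕ} (hF : ∀ n ∈ F, n < m) :
    ∑ n ∈ F, ((n : ℝ) + 1) ^ (c - 1) ≤ (m : ℝ) ^ c / c := by
  calc ∑ n ∈ F, ((n : ℝ) + 1) ^ (c - 1)
      ≤ ∑ n ∈ range m, ((n : ℝ) + 1) ^ (c - 1) :=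
        sum_le_sum_of_subset_of_nonneg (fun n hn => mem_range.2 (hF n hn))
          fun _ _ _ => by positivity
    _ ≤ ∑ n ∈ range m, (((n + 1 : ℕ) : ℝ) ^ c / c - ((n : ℕ) : ℝ) ^ c / c) := by
        gcongr with n
        rw [← sub_div, le_div_iff₀ hc₀, mul_comm]
        push_cast
        exact mul_rpow_sub_one_le_rpow_add_one_sub_rpow n.cast_nonneg hc₀.le hc₁
    _ = (m : ℝ) ^ c / c := by
        rw [sum_range_sub (fun n : ℕ => (n : ℝ) ^ c / c)]
        simp [zero_rpow hc₀.ne']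

theorem sum_add_one_rpow_neg_le {c : ℝ} (hc : 0 < c) {m : ℕ} {F : Finset ℕ}
    (hF : ∀ n ∈ F, m ≤ n) :
    ∑ n ∈ F, ((n : ℝ) + 1) ^ (-(c + 1)) ≤ (1 + 1 / c) * ((m : ℝ) + 1) ^ (-c) := by
  set f : ℕ → ℝ := fun n => ((n : ℝ) + 1) ^ (-(c + 1)) with hf
  -- `f (n + 1)` is below the integral of `t ↦ t ^ (-(c + 1))` over `[n + 1, n + 2]`; the extra
  -- `f n` in `G` pays for the first term, which has no such bound.
  set G : ℕ → ℝ := fun n => ((n : ℝ) + 1) ^ (-c) / c + f n with hG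
  have hstep : ∀ n, f n ≤ G n - G (n + 1) := by
    intro n
    have hmvt := rpow_add_one_sub_rpow_le_mul_rpow_sub_one (x := (n : ℝ) + 1) (e := -c)
      (by positivity) (by linarith)
    rw [show -c - 1 = -(c + 1) by ring] at hmvt
    have hnext : f (n + 1) ≤ (((n : ℝ) + 1) ^ (-c) - ((n : ℝ) + 1 + 1) ^ (-c)) / c := by
      rw [le_div_iff₀ hc, hf]
      push_cast
      linarith
    rw [sub_div] at hnext
    simp only [hG]
    push_cast
    linarith
  set K := m + F.sup id + 1
  have hFK : F ⊆ Ico m K := fun n hn =>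
    mem_Ico.2 ⟨hF n hn, Nat.lt_succ_of_le ((le_sup (f := id) hn).trans (Nat.le_add_left _ _))⟩
  calc ∑ n ∈ F, f n
      ≤ ∑ n ∈ Ico m K, f n := sum_le_sum_of_subset_of_nonneg hFK fun _ _ _ => by positivity
    _ ≤ ∑ n ∈ Ico m K, (-G (n + 1) - -G n) := sum_le_sum fun n _ => by linarith [hstep n]
    _ = -G K - -G m := sum_Ico_sub (fun i => -G i) (by omega)
    _ ≤ G m := by linarith [show 0 ≤ G K by positivity]
    _ ≤ (1 + 1 / c) * ((m : ℝ) + 1) ^ (-c) := by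
        have : f m ≤ ((m : ℝ) + 1) ^ (-c) :=
          rpow_le_rpow_of_exponent_le (by linarith [m.cast_nonneg (α := ℝ)]) (by linarith)
        simp only [hG]
        linarith [show (1 + 1 / c) * ((m : ℝ) + 1) ^ (-c)
          = ((m : ℝ) + 1) ^ (-c) + ((m : ℝ) + 1) ^ (-c) / c by ring]

-- Indices are shifted: `m n : ℕ` stand for the paper's `m + 1` and `n + 1`.
noncomputable def hatA (s : ℝ) (m n : ℕ) : ℝ :=
  if m ≤ n then ((m : ℝ) + 1) * ((n : ℝ) + 1) ^ (-2 : ℝ)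
  else ((m : ℝ) + 1) ^ (s - 1) * ((n : ℝ) + 1) ^ (-s)

theorem hatA_nonneg (s : ℝ) (m n : ℕ) : 0 ≤ hatA s m n := by
  unfold hatA; split <;> positivity

theorem hatA_weighted_row_sum_le {s : ℝ} (hs₀ : -(1 / 2) ≤ s) (hs₁ : s < 1 / 2) (m : ℕ)
    (F : Finset ℕ) :
    ∑ n ∈ F, hatA s m n * ((n : ℝ) + 1) ^ (-(1 / 2) : ℝ)
      ≤ (5 / 3 + 1 / (1 / 2 - s)) * ((m : ℝ) + 1) ^ (-(1 / 2) : ℝ) := by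
  have hm : (0 : ℝ) < (m : ℝ) + 1 := by positivity
  simp only [hatA, ite_mul, sum_ite]
  have hupper : ∑ n ∈ F with m ≤ n,
      ((m : ℝ) + 1) * ((n : ℝ) + 1) ^ (-2 : ℝ) * ((n : ℝ) + 1) ^ (-(1 / 2) : ℝ)
        ≤ 5 / 3 * ((m : ℝ) + 1) ^ (-(1 / 2) : ℝ) :=
    calc _ = ((m : ℝ) + 1) * ∑ n ∈ F with m ≤ n, ((n : ℝ) + 1) ^ (-(3 / 2 + 1) : ℝ) := by
          rw [mul_sum]
          refine sum_congr rfl fun n _ => ?_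
          rw [mul_assoc, ← rpow_add (by positivity)]
          norm_num
      _ ≤ ((m : ℝ) + 1) * ((1 + 1 / (3 / 2)) * ((m : ℝ) + 1) ^ (-(3 / 2) : ℝ)) := by
          gcongr
          exact sum_add_one_rpow_neg_le (by norm_num) fun n hn => (mem_filter.1 hn).2
      _ = 5 / 3 * ((m : ℝ) + 1) ^ (-(1 / 2) : ℝ) := by
          rw [show (-(1 / 2) : ℝ) = -(3 / 2) + 1 by norm_num, rpow_add_one hm.ne']
          ring
  have hlower : ∑ n ∈ F with ¬m ≤ n,
      ((m : ℝ) + 1) ^ (s - 1) * ((n : ℝ) + 1) ^ (-s) * ((n : ℝ) + 1) ^ (-(1 / 2) : ℝ)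
        ≤ 1 / (1 / 2 - s) * ((m : ℝ) + 1) ^ (-(1 / 2) : ℝ) :=
    calc _ = ((m : ℝ) + 1) ^ (s - 1)
          * ∑ n ∈ F with ¬m ≤ n, ((n : ℝ) + 1) ^ ((1 / 2 - s) - 1) := by
          rw [mul_sum]
          refine sum_congr rfl fun n _ => ?_
          rw [mul_assoc, ← rpow_add (by positivity)]
          ring_nf
      _ ≤ ((m : ℝ) + 1) ^ (s - 1) * ((m : ℝ) ^ (1 / 2 - s) / (1 / 2 - s)) := by
          gcongr
          exact sum_add_one_rpow_sub_one_le (by linarith) (by linarith)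
            fun n hn => not_le.1 (mem_filter.1 hn).2
      _ ≤ ((m : ℝ) + 1) ^ (s - 1) * (((m : ℝ) + 1) ^ (1 / 2 - s) / (1 / 2 - s)) := by
          gcongr
          linarith
      _ = 1 / (1 / 2 - s) * ((m : ℝ) + 1) ^ (-(1 / 2) : ℝ) := by
          rw [mul_div_assoc', ← rpow_add hm]
          ring_nf
  linarith [add_mul (5 / 3 : ℝ) (1 / (1 / 2 - s)) (((m : ℝ) + 1) ^ (-(1 / 2) : ℝ))]

theorem hatA_weighted_col_sum_le {s : ℝ} (hs : s < 1 / 2) (n : ℕ) (M : Finset ℕ) :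
    ∑ m ∈ M, hatA s m n * ((m : ℝ) + 1) ^ (-(1 / 2) : ℝ)
      ≤ (2 + 1 / (1 / 2 - s)) * ((n : ℝ) + 1) ^ (-(1 / 2) : ℝ) := by
  have hn : (0 : ℝ) < (n : ℝ) + 1 := by positivity
  simp only [hatA, ite_mul, sum_ite]
  have hupper : ∑ m ∈ M with m ≤ n,
      ((m : ℝ) + 1) * ((n : ℝ) + 1) ^ (-2 : ℝ) * ((m : ℝ) + 1) ^ (-(1 / 2) : ℝ)
        ≤ ((n : ℝ) + 1) ^ (-(1 / 2) : ℝ) :=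
    calc _ ≤ ∑ m ∈ M with m ≤ n, ((n : ℝ) + 1) ^ (-2 : ℝ) * ((n : ℝ) + 1) ^ (1 / 2 : ℝ) := by
          refine sum_le_sum fun m hm => ?_
          have hmn : (m : ℝ) ≤ n := Nat.cast_le.2 (mem_filter.1 hm).2
          rw [mul_right_comm, ← rpow_one_add' (by positivity) (by norm_num), mul_comm]
          norm_num
          gcongr
      _ ≤ ((n : ℝ) + 1) * (((n : ℝ) + 1) ^ (-2 : ℝ) * ((n : ℝ) + 1) ^ (1 / 2 : ℝ)) := by
          rw [sum_const, nsmul_eq_mul]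
          gcongr
          have hcard : (M.filter (· ≤ n)).card ≤ n + 1 := by
            simpa using card_le_card
              (fun m hm => mem_range.2 (Nat.lt_succ_of_le (mem_filter.1 hm).2) :
                M.filter (· ≤ n) ⊆ range (n + 1))
          exact_mod_cast hcard
      _ = ((n : ℝ) + 1) ^ (-(1 / 2) : ℝ) := by
          rw [← rpow_add hn, ← rpow_one_add' hn.le (by norm_num)]
          norm_num
  have hlower : ∑ m ∈ M with ¬m ≤ n,
      ((m : ℝ) + 1) ^ (s - 1) * ((n : ℝ) + 1) ^ (-s) * ((m : ℝ) + 1) ^ (-(1 / 2) : ℝ)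
        ≤ (1 + 1 / (1 / 2 - s)) * ((n : ℝ) + 1) ^ (-(1 / 2) : ℝ) :=
    calc _ = ((n : ℝ) + 1) ^ (-s)
          * ∑ m ∈ M with ¬m ≤ n, ((m : ℝ) + 1) ^ (-((1 / 2 - s) + 1)) := by
          rw [mul_sum]
          refine sum_congr rfl fun m _ => ?_
          rw [mul_right_comm, mul_comm, ← rpow_add (by positivity)]
          ring_nf
      _ ≤ ((n : ℝ) + 1) ^ (-s)
          * ((1 + 1 / (1 / 2 - s)) * (((n + 1 : ℕ) : ℝ) + 1) ^ (-(1 / 2 - s))) := by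
          gcongr
          exact sum_add_one_rpow_neg_le (by linarith) fun m hm => (not_le.1 (mem_filter.1 hm).2)
      _ ≤ ((n : ℝ) + 1) ^ (-s) * ((1 + 1 / (1 / 2 - s)) * ((n : ℝ) + 1) ^ (-(1 / 2 - s))) := by
          gcongr ((n : ℝ) + 1) ^ (-s) * ((1 + 1 / (1 / 2 - s)) * ?_)
          exact rpow_le_rpow_of_nonpos hn (by push_cast; linarith) (by linarith)
      _ = (1 + 1 / (1 / 2 - s)) * ((n : ℝ) + 1) ^ (-(1 / 2) : ℝ) := by
          rw [mul_left_comm, ← rpow_add hn]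
          ring_nf
  linarith [add_mul (1 : ℝ) (1 + 1 / (1 / 2 - s)) (((n : ℝ) + 1) ^ (-(1 / 2) : ℝ))]

/-- The matrix `Â_{mn} = m·n⁻²` for `n ≥ m` and `Â_{mn} = m^{s-1}·n^{-s}` for
`m > n` (indices `m, n ≥ 1`) defines a bounded operator on `ℓ²` when
`s ∈ (0, 1/2)`.  Here indices are shifted: `m, n : ℕ` represent `m+1, n+1`. -/
theorem stmt4 (s : ℝ) (hs0 : 0 < s) (hs : s < 1 / 2) :
    ∃ C > 0, ∀ x : ℕ → ℝ, ∀ hx : (Function.support x).Finite, (∀ n, 0 ≤ x n) →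
      ∀ M : Finset ℕ,
        ∑ m ∈ M, (∑ n ∈ hx.toFinset,
            (if m ≤ n then ((m : ℝ) + 1) * ((n : ℝ) + 1) ^ (-2 : ℝ)
              else ((m : ℝ) + 1) ^ (s - 1) * ((n : ℝ) + 1) ^ (-s)) * x n) ^ 2
          ≤ C * ∑ n ∈ hx.toFinset, (x n) ^ 2 := by
  refine ⟨(5 / 3 + 1 / (1 / 2 - s)) * (2 + 1 / (1 / 2 - s)), by positivity, ?_⟩
  intro x hx _ M
  exact schur_test (A := hatA s) (fun m _ n _ => hatA_nonneg s m n)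
    (fun n _ => by positivity) (by positivity)
    (fun m _ => hatA_weighted_row_sum_le (by linarith) hs m _)
    (fun n _ => hatA_weighted_col_sum_le hs n M) x
end

section
/- Let m > 0, T > 0 and define C₀(s,t) = min(s,t) + (m/2)·( e^{−s/m} + e^{−t/m} − e^{−|s−t|/m} − 1 ) for s,t ∈ [0,T]. Fix s ∈ (0,T) and let g(t) = C₀(s,t). Then: (i) g(0) = 0; (ii) g is twice continuously differentiable on [0,T] and infinitely differentiable on [0,T]∖{s}, and the one-sided limits of g''' at s satisfy g'''(s⁺) − g'''(s⁻) = 1/m²; (iii) m·g''(0) = g'(0) and m·g''(T) = −g'(T); (iv) −m²·g''''(t) + g''(t) = 0 for every t ∈ (0,T) with t ≠ s. -/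
open Real Set Filter

noncomputable section StmtAux

/-- left piece of `g` (valid for `t ≤ s`) and its derivatives -/
def Gm (m s : ℝ) : ℝ → ℝ := fun t =>
  t + m / 2 * (Real.exp (-s / m) + Real.exp (-t / m)
    - Real.exp (-s / m) * Real.exp (t / m) - 1)
def Gm1 (m s : ℝ) : ℝ → ℝ := fun t =>
  1 - 1 / 2 * (Real.exp (-t / m) + Real.exp (-s / m) * Real.exp (t / m))
def Gm2 (m s : ℝ) : ℝ → ℝ := fun t =>
  1 / (2 * m) * (Real.exp (-t / m) - Real.exp (-s / m) * Real.exp (t / m))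
def Gm3 (m s : ℝ) : ℝ → ℝ := fun t =>
  -(1 / (2 * m ^ 2)) * (Real.exp (-t / m) + Real.exp (-s / m) * Real.exp (t / m))
def Gm4 (m s : ℝ) : ℝ → ℝ := fun t =>
  1 / (2 * m ^ 3) * (Real.exp (-t / m) - Real.exp (-s / m) * Real.exp (t / m))

/-- right piece of `g` (valid for `s ≤ t`) and its derivatives -/
def Gp (m s : ℝ) : ℝ → ℝ := fun t =>
  s + m / 2 * (Real.exp (-s / m) + Real.exp (-t / m)
    - Real.exp (s / m) * Real.exp (-t / m) - 1)
def Gp1 (m s : ℝ) : ℝ → ℝ := fun t =>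
  1 / 2 * (Real.exp (s / m) - 1) * Real.exp (-t / m)
def Gp2 (m s : ℝ) : ℝ → ℝ := fun t =>
  -(1 / (2 * m)) * (Real.exp (s / m) - 1) * Real.exp (-t / m)
def Gp3 (m s : ℝ) : ℝ → ℝ := fun t =>
  1 / (2 * m ^ 2) * (Real.exp (s / m) - 1) * Real.exp (-t / m)
def Gp4 (m s : ℝ) : ℝ → ℝ := fun t =>
  -(1 / (2 * m ^ 3)) * (Real.exp (s / m) - 1) * Real.exp (-t / m)

variable {m s : ℝ}

lemma expN (m t : ℝ) : HasDerivAt (fun x : ℝ => Real.exp (-x / m))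
    (Real.exp (-t / m) * (-1 / m)) t := by
  simpa using ((hasDerivAt_id t).neg.div_const m).exp

lemma expP (m t : ℝ) : HasDerivAt (fun x : ℝ => Real.exp (x / m))
    (Real.exp (t / m) * (1 / m)) t := by
  simpa using ((hasDerivAt_id t).div_const m).exp

lemma hGm (hm : m ≠ 0) (t : ℝ) : HasDerivAt (Gm m s) (Gm1 m s t) t := by
  have H := (hasDerivAt_id t).add
    (((((hasDerivAt_const t (Real.exp (-s / m))).add (expN m t)).sub
      ((expP m t).const_mul (Real.exp (-s / m)))).sub
      (hasDerivAt_const t (1 : ℝ))).const_mul (m / 2))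
  refine H.congr_deriv ?_
  unfold Gm1; field_simp; ring

lemma hGm1 (hm : m ≠ 0) (t : ℝ) : HasDerivAt (Gm1 m s) (Gm2 m s t) t := by
  have H := (hasDerivAt_const t (1 : ℝ)).sub
    (((expN m t).add ((expP m t).const_mul (Real.exp (-s / m)))).const_mul (1 / 2))
  refine H.congr_deriv ?_
  unfold Gm2; field_simp; ring

lemma hGm2 (hm : m ≠ 0) (t : ℝ) : HasDerivAt (Gm2 m s) (Gm3 m s t) t := by
  have H := ((expN m t).sub ((expP m t).const_mul (Real.exp (-s / m)))).const_mul
    (1 / (2 * m))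
  refine H.congr_deriv ?_
  unfold Gm3; field_simp; ring

lemma hGm3 (hm : m ≠ 0) (t : ℝ) : HasDerivAt (Gm3 m s) (Gm4 m s t) t := by
  have H := ((expN m t).add ((expP m t).const_mul (Real.exp (-s / m)))).const_mul
    (-(1 / (2 * m ^ 2)))
  refine H.congr_deriv ?_
  unfold Gm4; field_simp; ring

lemma hGp (hm : m ≠ 0) (t : ℝ) : HasDerivAt (Gp m s) (Gp1 m s t) t := by
  have H := (hasDerivAt_const t s).add
    (((((hasDerivAt_const t (Real.exp (-s / m))).add (expN m t)).sub
      ((expN m t).const_mul (Real.exp (s / m)))).sub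
      (hasDerivAt_const t (1 : ℝ))).const_mul (m / 2))
  refine H.congr_deriv ?_
  unfold Gp1; field_simp; ring

lemma hGp1 (hm : m ≠ 0) (t : ℝ) : HasDerivAt (Gp1 m s) (Gp2 m s t) t := by
  have H := (expN m t).const_mul (1 / 2 * (Real.exp (s / m) - 1))
  refine H.congr_deriv ?_
  unfold Gp2; field_simp

lemma hGp2 (hm : m ≠ 0) (t : ℝ) : HasDerivAt (Gp2 m s) (Gp3 m s t) t := by
  have H := (expN m t).const_mul (-(1 / (2 * m)) * (Real.exp (s / m) - 1))
  refine H.congr_deriv ?_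
  unfold Gp3; field_simp

lemma hGp3 (hm : m ≠ 0) (t : ℝ) : HasDerivAt (Gp3 m s) (Gp4 m s t) t := by
  have H := (expN m t).const_mul (1 / (2 * m ^ 2) * (Real.exp (s / m) - 1))
  refine H.congr_deriv ?_
  unfold Gp4; field_simp

lemma expMul : Real.exp (s / m) * Real.exp (-s / m) = 1 := by
  rw [← Real.exp_add]; norm_num [neg_div]

lemma match1 : Gm1 m s s = Gp1 m s s := by
  unfold Gm1 Gp1
  have h := expMul (m := m) (s := s)
  linear_combination (-1 : ℝ) * h

lemma match2 : Gm2 m s s = Gp2 m s s := by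
  unfold Gm2 Gp2
  ring

/-- gluing two smooth functions that agree with `f` on the two sides -/
lemma glue {f F G F' G' : ℝ → ℝ} {s : ℝ}
    (hF : ∀ t, HasDerivAt F (F' t) t) (hG : ∀ t, HasDerivAt G (G' t) t)
    (hfF : ∀ t, t ≤ s → f t = F t) (hfG : ∀ t, s ≤ t → f t = G t)
    (hmatch : F' s = G' s) (t : ℝ) :
    HasDerivAt f (if t ≤ s then F' t else G' t) t := by
  rcases lt_trichotomy t s with h | rfl | h
  · rw [if_pos h.le]
    apply (hF t).congr_of_eventuallyEq
    filter_upwards [Iio_mem_nhds h] with x hx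
    exact hfF x hx.le
  · rw [if_pos le_rfl]
    have h1 : HasDerivWithinAt f (F' t) (Iic t) t :=
      ((hF t).hasDerivWithinAt).congr (fun x hx => hfF x hx) (hfF t le_rfl)
    have h2 : HasDerivWithinAt f (F' t) (Ici t) t := by
      rw [hmatch]
      exact ((hG t).hasDerivWithinAt).congr (fun x hx => hfG x hx) (hfG t le_rfl)
    have h3 := h1.union h2
    rw [Iic_union_Ici] at h3
    exact hasDerivWithinAt_univ.mp h3
  · rw [if_neg (not_le.mpr h)]
    apply (hG t).congr_of_eventuallyEq
    filter_upwards [Ioi_mem_nhds h] with x hx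
    exact hfG x hx.le

lemma iter_congr {f h : ℝ → ℝ} {t : ℝ} (he : f =ᶠ[nhds t] h) (n : ℕ) :
    iteratedDeriv n f t = iteratedDeriv n h t := by
  have H : ∀ n : ℕ, iteratedDeriv n f =ᶠ[nhds t] iteratedDeriv n h := by
    intro n
    induction n with
    | zero => simpa [iteratedDeriv_zero] using he
    | succ k ih => simpa [iteratedDeriv_succ] using ih.deriv
  exact (H n).eq_of_nhds

lemma expNc : ContDiff ℝ (⊤ : ℕ∞) fun t : ℝ => Real.exp (-t / m) :=
  Real.contDiff_exp.comp (contDiff_id.neg.div_const m)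

lemma expPc : ContDiff ℝ (⊤ : ℕ∞) fun t : ℝ => Real.exp (t / m) :=
  Real.contDiff_exp.comp (contDiff_id.div_const m)

lemma contGm (hm : m ≠ 0) : ContDiff ℝ (⊤ : ℕ∞) (Gm m s) := by
  unfold Gm
  exact contDiff_id.add (contDiff_const.mul
    (((contDiff_const.add expNc).sub (contDiff_const.mul expPc)).sub contDiff_const))

lemma contGp (hm : m ≠ 0) : ContDiff ℝ (⊤ : ℕ∞) (Gp m s) := by
  unfold Gp
  exact contDiff_const.add (contDiff_const.mul
    (((contDiff_const.add expNc).sub (contDiff_const.mul expNc)).sub contDiff_const))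

lemma iterGm (hm : m ≠ 0) :
    iteratedDeriv 2 (Gm m s) = Gm2 m s ∧ iteratedDeriv 3 (Gm m s) = Gm3 m s ∧
      iteratedDeriv 4 (Gm m s) = Gm4 m s := by
  have d0 : deriv (Gm m s) = Gm1 m s := funext fun t => (hGm hm t).deriv
  have d1 : deriv (Gm1 m s) = Gm2 m s := funext fun t => (hGm1 hm t).deriv
  have d2 : deriv (Gm2 m s) = Gm3 m s := funext fun t => (hGm2 hm t).deriv
  have d3 : deriv (Gm3 m s) = Gm4 m s := funext fun t => (hGm3 hm t).deriv
  refine ⟨?_, ?_, ?_⟩ <;>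
    simp [iteratedDeriv_succ, iteratedDeriv_zero, d0, d1, d2, d3]

lemma iterGp (hm : m ≠ 0) :
    iteratedDeriv 2 (Gp m s) = Gp2 m s ∧ iteratedDeriv 3 (Gp m s) = Gp3 m s ∧
      iteratedDeriv 4 (Gp m s) = Gp4 m s := by
  have d0 : deriv (Gp m s) = Gp1 m s := funext fun t => (hGp hm t).deriv
  have d1 : deriv (Gp1 m s) = Gp2 m s := funext fun t => (hGp1 hm t).deriv
  have d2 : deriv (Gp2 m s) = Gp3 m s := funext fun t => (hGp2 hm t).deriv
  have d3 : deriv (Gp3 m s) = Gp4 m s := funext fun t => (hGp3 hm t).deriv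
  refine ⟨?_, ?_, ?_⟩ <;>
    simp [iteratedDeriv_succ, iteratedDeriv_zero, d0, d1, d2, d3]

end StmtAux

/-- The covariance function `C₀(s,·)` behaves as a Green's function for `−L`,
`L = −m²∂t⁴ + ∂t²`: it vanishes at `0`, is `C²` on `[0,T]` and smooth away from
`s`, its third derivative jumps by `1/m²` at `s`, it satisfies the boundary
conditions `m g''(0) = g'(0)`, `m g''(T) = −g'(T)`, and `L g = 0` away from `s`. -/
theorem stmt16 (m T s : ℝ) (hm : 0 < m) (hT : 0 < T) (hs : s ∈ Set.Ioo 0 T)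
    (g : ℝ → ℝ)
    (hg : g = fun t => min s t + (m / 2) *
      (Real.exp (-s / m) + Real.exp (-t / m) - Real.exp (-|s - t| / m) - 1)) :
    g 0 = 0
    ∧ ContDiffOn ℝ 2 g (Set.Icc 0 T)
    ∧ ContDiffOn ℝ (⊤ : ℕ∞) g (Set.Icc 0 T \ {s})
    ∧ (∃ Lp Lm : ℝ,
        Filter.Tendsto (fun t => iteratedDeriv 3 g t) (nhdsWithin s (Set.Ioi s)) (nhds Lp)
        ∧ Filter.Tendsto (fun t => iteratedDeriv 3 g t) (nhdsWithin s (Set.Iio s)) (nhds Lm)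
        ∧ Lp - Lm = 1 / m ^ 2)
    ∧ m * iteratedDeriv 2 g 0 = deriv g 0
    ∧ m * iteratedDeriv 2 g T = -deriv g T
    ∧ (∀ t ∈ Set.Ioo 0 T, t ≠ s →
        -(m ^ 2) * iteratedDeriv 4 g t + iteratedDeriv 2 g t = 0) := by
  have hm0 : m ≠ 0 := ne_of_gt hm
  obtain ⟨hs0, hsT⟩ := hs
  -- g agrees with the two pieces
  have hgm : ∀ t, t ≤ s → g t = Gm m s t := by
    intro t ht
    rw [hg]
    simp only [Gm, min_eq_right ht, abs_of_nonneg (sub_nonneg.mpr ht)]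
    rw [show Real.exp (-(s - t) / m) = Real.exp (-s / m) * Real.exp (t / m) by
      rw [← Real.exp_add]; congr 1; ring]
  have hgp : ∀ t, s ≤ t → g t = Gp m s t := by
    intro t ht
    rw [hg]
    simp only [Gp, min_eq_left ht, abs_of_nonpos (sub_nonpos.mpr ht), neg_sub]
    rw [show Real.exp ((s - t) / m) = Real.exp (s / m) * Real.exp (-t / m) by
      rw [← Real.exp_add]; congr 1; ring]
  -- global first and second derivatives
  set D1 : ℝ → ℝ := fun t => if t ≤ s then Gm1 m s t else Gp1 m s t with hD1def
  set D2 : ℝ → ℝ := fun t => if t ≤ s then Gm2 m s t else Gp2 m s t with hD2def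
  have hD1 : ∀ t, HasDerivAt g (D1 t) t :=
    glue (hGm hm0) (hGp hm0) hgm hgp match1
  have hD1m : ∀ t, t ≤ s → D1 t = Gm1 m s t := fun t ht => if_pos ht
  have hD1p : ∀ t, s ≤ t → D1 t = Gp1 m s t := by
    intro t ht
    rcases eq_or_lt_of_le ht with rfl | h
    · simp only [hD1def, if_pos le_rfl]; exact match1
    · exact if_neg (not_le.mpr h)
  have hD2 : ∀ t, HasDerivAt D1 (D2 t) t :=
    glue (hGm1 hm0) (hGp1 hm0) hD1m hD1p match2
  have hderivg : deriv g = D1 := funext fun t => (hD1 t).deriv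
  have hderivD1 : deriv D1 = D2 := funext fun t => (hD2 t).deriv
  have hiter2 : iteratedDeriv 2 g = D2 := by
    simp [iteratedDeriv_succ, iteratedDeriv_zero, hderivg, hderivD1]
  have hD2cont : Continuous D2 := by
    have h1 : Continuous (Gm2 m s) := by unfold Gm2; fun_prop
    have h2 : Continuous (Gp2 m s) := by unfold Gp2; fun_prop
    exact h1.if_le h2 continuous_id continuous_const
      (fun x hx => by rw [hx]; exact match2)
  -- eventual equalities away from s
  have hev_m : ∀ t, t < s → g =ᶠ[nhds t] Gm m s := by
    intro t ht
    filter_upwards [Iio_mem_nhds ht] with x hx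
    exact hgm x hx.le
  have hev_p : ∀ t, s < t → g =ᶠ[nhds t] Gp m s := by
    intro t ht
    filter_upwards [Ioi_mem_nhds ht] with x hx
    exact hgp x hx.le
  obtain ⟨iGm2, iGm3, iGm4⟩ := iterGm (s := s) hm0
  obtain ⟨iGp2, iGp3, iGp4⟩ := iterGp (s := s) hm0
  refine ⟨?_, ?_, ?_, ?_, ?_, ?_, ?_⟩
  · -- g 0 = 0
    rw [hg]
    simp only [min_eq_right hs0.le, sub_zero, abs_of_nonneg hs0.le, neg_zero,
      zero_div, Real.exp_zero]
    ring
  · -- C² on [0,T]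
    have : ContDiff ℝ 2 g := by
      rw [show (2 : WithTop ℕ∞) = 1 + 1 from rfl, contDiff_succ_iff_deriv]
      refine ⟨fun t => (hD1 t).differentiableAt, by simp, ?_⟩
      rw [hderivg, contDiff_one_iff_deriv]
      exact ⟨fun t => (hD2 t).differentiableAt, by rw [hderivD1]; exact hD2cont⟩
    exact this.contDiffOn
  · -- smooth away from s
    intro t ht
    apply ContDiffAt.contDiffWithinAt
    rcases lt_or_gt_of_ne ht.2 with h | h
    · exact ((contGm (s := s) hm0).contDiffAt).congr_of_eventuallyEq (hev_m t h)
    · exact ((contGp (s := s) hm0).contDiffAt).congr_of_eventuallyEq (hev_p t h)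
  · -- jump of the third derivative
    refine ⟨Gp3 m s s, Gm3 m s s, ?_, ?_, ?_⟩
    · have hc : Filter.Tendsto (Gp3 m s) (nhdsWithin s (Set.Ioi s)) (nhds (Gp3 m s s)) := by
        have hcont : Continuous (Gp3 m s) := by unfold Gp3; fun_prop
        exact hcont.continuousAt.tendsto.mono_left nhdsWithin_le_nhds
      apply hc.congr'
      filter_upwards [self_mem_nhdsWithin] with x hx
      exact ((iter_congr (hev_p x hx) 3).trans (congrFun iGp3 x)).symm
    · have hc : Filter.Tendsto (Gm3 m s) (nhdsWithin s (Set.Iio s)) (nhds (Gm3 m s s)) := by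
        have hcont : Continuous (Gm3 m s) := by unfold Gm3; fun_prop
        exact hcont.continuousAt.tendsto.mono_left nhdsWithin_le_nhds
      apply hc.congr'
      filter_upwards [self_mem_nhdsWithin] with x hx
      exact ((iter_congr (hev_m x hx) 3).trans (congrFun iGm3 x)).symm
    · unfold Gp3 Gm3
      have h := expMul (m := m) (s := s)
      have hm2 : m ^ 2 ≠ 0 := pow_ne_zero 2 hm0
      field_simp
      rw [neg_div] at h; linear_combination (2 : ℝ) * h
  · -- boundary condition at 0
    rw [hiter2, hderivg]
    have h1 : D1 0 = Gm1 m s 0 := if_pos hs0.le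
    have h2 : D2 0 = Gm2 m s 0 := if_pos hs0.le
    rw [h1, h2]
    unfold Gm1 Gm2
    norm_num
    field_simp
    ring
  · -- boundary condition at T
    rw [hiter2, hderivg]
    have h1 : D1 T = Gp1 m s T := if_neg (not_le.mpr hsT)
    have h2 : D2 T = Gp2 m s T := if_neg (not_le.mpr hsT)
    rw [h1, h2]
    unfold Gp1 Gp2
    field_simp
  · -- the ODE away from s
    intro t _ hts
    rw [hiter2]
    rcases lt_or_gt_of_ne hts with h | h
    · have h4 : iteratedDeriv 4 g t = Gm4 m s t :=
        (iter_congr (hev_m t h) 4).trans (congrFun iGm4 t)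
      have h2 : D2 t = Gm2 m s t := if_pos h.le
      rw [h4, h2]
      unfold Gm2 Gm4
      field_simp
      ring
    · have h4 : iteratedDeriv 4 g t = Gp4 m s t :=
        (iter_congr (hev_p t h) 4).trans (congrFun iGp4 t)
      have h2 : D2 t = Gp2 m s t := if_neg (not_le.mpr h)
      rw [h4, h2]
      unfold Gp2 Gp4
      field_simp
      ring
end

section
/- Let m > 0, T > 0, d ≥ 1 and x₋, x₊ ∈ ℝᵈ. Define C₀(s,t) = min(s,t) + (m/2)·( e^{−s/m} + e^{−t/m} − e^{−|s−t|/m} − 1 ) and x̄(t) = x₋ + ( C₀(t,T) / C₀(T,T) )·( x₊ − x₋ ) for t ∈ [0,T]. Then C₀(T,T) = T − m·(1 − e^{−T/m}) > 0, x̄ is infinitely differentiable on [0,T], and x̄ satisfies: −m²·x̄''''(t) + x̄''(t) = 0 for all t ∈ (0,T), together with the boundary conditions x̄(0) = x₋, x̄(T) = x₊, m·x̄''(0) = x̄'(0) and m·x̄''(T) = −x̄'(T). -/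
open Real Set Filter

namespace Stmt17Aux

variable {F : Type*} [NormedAddCommGroup F] [NormedSpace ℝ F]

/-- iterated derivatives agree for eventually equal functions. -/
lemma iter_ev {f g : ℝ → F} {t : ℝ} (h : f =ᶠ[nhds t] g) (n : ℕ) :
    iteratedDeriv n f t = iteratedDeriv n g t := by
  have H : ∀ n : ℕ, iteratedDeriv n f =ᶠ[nhds t] iteratedDeriv n g := by
    intro n
    induction n with
    | zero => simpa using h
    | succ k ih => simpa only [iteratedDeriv_succ] using ih.deriv
  exact (H n).eq_of_nhds

noncomputable def phi (m T A : ℝ) : ℝ → ℝ :=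
  fun t => t + (m/2) * (Real.exp (-t/m) + A - Real.exp ((t-T)/m) - 1)
noncomputable def phi1 (m T : ℝ) : ℝ → ℝ :=
  fun t => 1 - (1/2) * Real.exp (-t/m) - (1/2) * Real.exp ((t-T)/m)
noncomputable def phi2 (m T : ℝ) : ℝ → ℝ :=
  fun t => (1/(2*m)) * (Real.exp (-t/m) - Real.exp ((t-T)/m))
noncomputable def phi3 (m T : ℝ) : ℝ → ℝ :=
  fun t => -(1/(2*m^2)) * (Real.exp (-t/m) + Real.exp ((t-T)/m))
noncomputable def phi4 (m T : ℝ) : ℝ → ℝ :=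
  fun t => (1/(2*m^3)) * (Real.exp (-t/m) - Real.exp ((t-T)/m))
noncomputable def psi (m T A : ℝ) : ℝ → ℝ :=
  fun t => T + (m/2) * (Real.exp (-t/m) + A - Real.exp ((T-t)/m) - 1)
noncomputable def psi1 (m T : ℝ) : ℝ → ℝ :=
  fun t => -((1/2) * Real.exp (-t/m)) + (1/2) * Real.exp ((T-t)/m)
noncomputable def psi2 (m T : ℝ) : ℝ → ℝ :=
  fun t => (1/(2*m)) * (Real.exp (-t/m) - Real.exp ((T-t)/m))

lemma he1 (m t : ℝ) :
    HasDerivAt (fun s => Real.exp (-s/m)) (Real.exp (-t/m) * (-1/m)) t := by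
  have h : HasDerivAt (fun s : ℝ => -s/m) (-1/m) t := (hasDerivAt_id t).neg.div_const m
  simpa using h.exp

lemma he2 (m T t : ℝ) :
    HasDerivAt (fun s => Real.exp ((s-T)/m)) (Real.exp ((t-T)/m) * (1/m)) t := by
  have h : HasDerivAt (fun s : ℝ => (s-T)/m) (1/m) t :=
    ((hasDerivAt_id t).sub_const T).div_const m
  simpa using h.exp

lemma he3 (m T t : ℝ) :
    HasDerivAt (fun s => Real.exp ((T-s)/m)) (Real.exp ((T-t)/m) * (-1/m)) t := by
  have h : HasDerivAt (fun s : ℝ => (T-s)/m) (-1/m) t := by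
    simpa using ((hasDerivAt_id t).const_sub T).div_const m
  simpa using h.exp

lemma hphi (m T A : ℝ) (hm : m ≠ 0) (t : ℝ) : HasDerivAt (phi m T A) (phi1 m T t) t := by
  have h : HasDerivAt (fun s => s + (m/2) * (Real.exp (-s/m) + A - Real.exp ((s-T)/m) - 1))
      (1 + (m/2) * ((Real.exp (-t/m) * (-1/m) - Real.exp ((t-T)/m) * (1/m)) - 0)) t := by
    exact (hasDerivAt_id t).add
      (((((he1 m t).add_const A).sub (he2 m T t)).sub (hasDerivAt_const t 1)).const_mul (m/2))
  unfold phi phi1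
  convert h using 1
  field_simp
  try ring

lemma hphi1 (m T : ℝ) (hm : m ≠ 0) (t : ℝ) : HasDerivAt (phi1 m T) (phi2 m T t) t := by
  have h : HasDerivAt (fun s => 1 - (1/2) * Real.exp (-s/m) - (1/2) * Real.exp ((s-T)/m))
      (-((1/2) * (Real.exp (-t/m) * (-1/m))) - (1/2) * (Real.exp ((t-T)/m) * (1/m))) t :=
    (((he1 m t).const_mul (1/2)).const_sub 1).sub ((he2 m T t).const_mul (1/2))
  unfold phi1 phi2
  convert h using 1
  field_simp
  try ring

lemma hphi2 (m T : ℝ) (hm : m ≠ 0) (t : ℝ) : HasDerivAt (phi2 m T) (phi3 m T t) t := by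
  have h : HasDerivAt (fun s => (1/(2*m)) * (Real.exp (-s/m) - Real.exp ((s-T)/m)))
      ((1/(2*m)) * (Real.exp (-t/m) * (-1/m) - Real.exp ((t-T)/m) * (1/m))) t :=
    ((he1 m t).sub (he2 m T t)).const_mul (1/(2*m))
  unfold phi2 phi3
  convert h using 1
  field_simp
  try ring

lemma hphi3 (m T : ℝ) (hm : m ≠ 0) (t : ℝ) : HasDerivAt (phi3 m T) (phi4 m T t) t := by
  have h : HasDerivAt (fun s => -(1/(2*m^2)) * (Real.exp (-s/m) + Real.exp ((s-T)/m)))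
      (-(1/(2*m^2)) * (Real.exp (-t/m) * (-1/m) + Real.exp ((t-T)/m) * (1/m))) t :=
    ((he1 m t).add (he2 m T t)).const_mul (-(1/(2*m^2)))
  unfold phi3 phi4
  convert h using 1
  field_simp
  try ring

lemma hpsi (m T A : ℝ) (hm : m ≠ 0) (t : ℝ) : HasDerivAt (psi m T A) (psi1 m T t) t := by
  have h : HasDerivAt (fun s => T + (m/2) * (Real.exp (-s/m) + A - Real.exp ((T-s)/m) - 1))
      ((m/2) * ((Real.exp (-t/m) * (-1/m) - Real.exp ((T-t)/m) * (-1/m)) - 0)) t := by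
    exact ((((he1 m t).add_const A).sub (he3 m T t)).sub (hasDerivAt_const t 1)
      |>.const_mul (m/2)).const_add T
  unfold psi psi1
  convert h using 1
  field_simp
  try ring

lemma hpsi1 (m T : ℝ) (hm : m ≠ 0) (t : ℝ) : HasDerivAt (psi1 m T) (psi2 m T t) t := by
  have h : HasDerivAt (fun s => -((1/2) * Real.exp (-s/m)) + (1/2) * Real.exp ((T-s)/m))
      (-((1/2) * (Real.exp (-t/m) * (-1/m))) + (1/2) * (Real.exp ((T-t)/m) * (-1/m))) t :=
    ((he1 m t).const_mul (1/2)).neg.add ((he3 m T t).const_mul (1/2))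
  unfold psi1 psi2
  convert h using 1
  field_simp
  try ring

lemma phi_contDiff (m T A : ℝ) (hm : m ≠ 0) : ContDiff ℝ (⊤ : ℕ∞) (phi m T A) := by
  unfold phi
  refine contDiff_id.add (contDiff_const.mul ?_)
  refine ContDiff.sub (ContDiff.sub (ContDiff.add ?_ contDiff_const) ?_) contDiff_const
  · exact Real.contDiff_exp.comp (contDiff_id.neg.div_const m)
  · exact Real.contDiff_exp.comp ((contDiff_id.sub contDiff_const).div_const m)

end Stmt17Aux

open Stmt17Aux

/-- The mean `x̄(t) = x₋ + (C₀(t,T)/C₀(T,T))(x₊ − x₋)` of the linear Langevin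
bridge solves the boundary value problem `L x̄ = 0`, `x̄(0) = x₋`, `x̄(T) = x₊`,
`m x̄''(0) = x̄'(0)`, `m x̄''(T) = −x̄'(T)`, where `L = −m²∂t⁴ + ∂t²`. -/
theorem stmt17 (m T : ℝ) (hm : 0 < m) (hT : 0 < T) (d : ℕ) (hd : 1 ≤ d)
    (xminus xplus : EuclideanSpace ℝ (Fin d))
    (C₀ : ℝ → ℝ → ℝ)
    (hC₀ : C₀ = fun s t => min s t + (m / 2) *
      (Real.exp (-s / m) + Real.exp (-t / m) - Real.exp (-|s - t| / m) - 1))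
    (xbar : ℝ → EuclideanSpace ℝ (Fin d))
    (hxbar : xbar = fun t => xminus + (C₀ t T / C₀ T T) • (xplus - xminus)) :
    C₀ T T = T - m * (1 - Real.exp (-T / m))
    ∧ 0 < C₀ T T
    ∧ ContDiffOn ℝ (⊤ : ℕ∞) xbar (Set.Icc 0 T)
    ∧ (∀ t ∈ Set.Ioo 0 T,
        -(m ^ 2) • iteratedDeriv 4 xbar t + iteratedDeriv 2 xbar t = 0)
    ∧ xbar 0 = xminus
    ∧ xbar T = xplus
    ∧ m • iteratedDeriv 2 xbar 0 = deriv xbar 0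
    ∧ m • iteratedDeriv 2 xbar T = -deriv xbar T := by
  have hm' : m ≠ 0 := ne_of_gt hm
  set A : ℝ := Real.exp (-T/m) with hA
  set K : ℝ := T - m * (1 - A) with hK
  -- value of C₀ T T
  have hKval : C₀ T T = K := by
    rw [hC₀]
    simp only [min_self, sub_self, abs_zero, neg_zero, zero_div, Real.exp_zero]
    rw [hK, hA]
    ring
  -- positivity of K
  have hKpos : 0 < K := by
    have h0 : (-T/m : ℝ) ≠ 0 := by
      intro h
      have : T = 0 := by field_simp at h; linarith
      linarith
    have h1 : -T/m + 1 < A := Real.add_one_lt_exp h0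
    have h2 : m * (-T/m + 1) < m * A := by exact mul_lt_mul_of_pos_left h1 hm
    have h3 : m * (-T/m) = -T := by field_simp
    have h4 : m * (-T/m) + m < m * A := by rw [mul_add, mul_one] at h2; linarith
    rw [h3] at h4
    have h5 : m * (1 - A) = m - m * A := by ring
    rw [hK]; linarith
  have hKne : K ≠ 0 := ne_of_gt hKpos
  -- reformulate xbar
  set v : EuclideanSpace ℝ (Fin d) := xplus - xminus with hv
  set w : EuclideanSpace ℝ (Fin d) := K⁻¹ • v with hw
  have hxw : ∀ t, xbar t = xminus + (C₀ t T) • w := by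
    intro t
    rw [hxbar]
    simp only [hw, hKval, smul_smul, div_eq_mul_inv]
  -- C₀ agrees with phi on Iic T and psi on Ici T
  have hCphi : ∀ t ∈ Iic T, C₀ t T = phi m T A t := by
    intro t ht
    rw [hC₀]
    simp only [phi]
    rw [min_eq_left ht, abs_of_nonpos (sub_nonpos.mpr ht), hA, neg_neg]
  have hCpsi : ∀ t ∈ Ici T, C₀ t T = psi m T A t := by
    intro t ht
    rw [hC₀]
    simp only [psi]
    rw [min_eq_right ht, abs_of_nonneg (sub_nonneg.mpr ht), hA, neg_sub]
  -- global smooth comparison functions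
  set Φ : ℝ → EuclideanSpace ℝ (Fin d) := fun t => xminus + phi m T A t • w with hΦ
  set Ψ : ℝ → EuclideanSpace ℝ (Fin d) := fun t => xminus + psi m T A t • w with hΨ
  have hxΦ : ∀ t ∈ Iic T, xbar t = Φ t := by
    intro t ht; rw [hxw t, hΦ, hCphi t ht]
  have hxΨ : ∀ t ∈ Ici T, xbar t = Ψ t := by
    intro t ht; rw [hxw t, hΨ, hCpsi t ht]
  -- derivatives of Φ
  have hdΦ : ∀ t, HasDerivAt Φ (phi1 m T t • w) t := fun t =>
    ((hphi m T A hm' t).smul_const w).const_add xminus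
  have hdΨ : ∀ t, HasDerivAt Ψ (psi1 m T t • w) t := fun t =>
    ((hpsi m T A hm' t).smul_const w).const_add xminus
  have dΦ : deriv Φ = fun t => phi1 m T t • w := funext fun t => (hdΦ t).deriv
  have d1 : deriv (fun t => phi1 m T t • w) = fun t => phi2 m T t • w :=
    funext fun t => ((hphi1 m T hm' t).smul_const w).deriv
  have d2 : deriv (fun t => phi2 m T t • w) = fun t => phi3 m T t • w :=
    funext fun t => ((hphi2 m T hm' t).smul_const w).deriv
  have d3 : deriv (fun t => phi3 m T t • w) = fun t => phi4 m T t • w :=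
    funext fun t => ((hphi3 m T hm' t).smul_const w).deriv
  have hiter2Φ : iteratedDeriv 2 Φ = fun t => phi2 m T t • w := by
    show iteratedDeriv (1+1) Φ = _
    rw [iteratedDeriv_succ', dΦ, iteratedDeriv_one, d1]
  have hiter4Φ : iteratedDeriv 4 Φ = fun t => phi4 m T t • w := by
    show iteratedDeriv (3+1) Φ = _
    rw [iteratedDeriv_succ', dΦ]
    show iteratedDeriv (2+1) _ = _
    rw [iteratedDeriv_succ', d1]
    show iteratedDeriv (1+1) _ = _
    rw [iteratedDeriv_succ', d2, iteratedDeriv_one, d3]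
  -- eventual equality below T
  have hev : ∀ t, t < T → xbar =ᶠ[nhds t] Φ :=
    fun t ht => Filter.eventuallyEq_of_mem (Iio_mem_nhds ht)
      (fun y hy => hxΦ y (mem_Iic.mpr (le_of_lt (mem_Iio.mp hy))))
  have hevΨ : ∀ t, T < t → xbar =ᶠ[nhds t] Ψ :=
    fun t ht => Filter.eventuallyEq_of_mem (Ioi_mem_nhds ht)
      (fun y hy => hxΨ y (mem_Ici.mpr (le_of_lt (mem_Ioi.mp hy))))
  -- iterated derivatives of xbar below T
  have hi : ∀ n, ∀ t, t < T → iteratedDeriv n xbar t = iteratedDeriv n Φ t :=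
    fun n t ht => iter_ev (hev t ht) n
  -- key values at T
  have hpsi1T : psi1 m T T = phi1 m T T := by
    unfold psi1 phi1; rw [sub_self, zero_div, Real.exp_zero]; ring
  have hpsi2T : psi2 m T T = phi2 m T T := by
    unfold psi2 phi2; rw [sub_self]
  -- derivative of xbar at T
  have hDxT : HasDerivAt xbar (phi1 m T T • w) T := by
    have hL : HasDerivWithinAt xbar (phi1 m T T • w) (Iic T) T :=
      (hdΦ T).hasDerivWithinAt.congr hxΦ (hxΦ T (mem_Iic.mpr le_rfl))
    have hR : HasDerivWithinAt xbar (phi1 m T T • w) (Ici T) T := by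
      have := (hdΨ T).hasDerivWithinAt.congr hxΨ (hxΨ T (mem_Ici.mpr le_rfl))
      rwa [hpsi1T] at this
    have := hL.union hR
    rwa [Iic_union_Ici, hasDerivWithinAt_univ] at this
  -- the first derivative of xbar as a function near T
  have hdL : ∀ y ∈ Iic T, deriv xbar y = phi1 m T y • w := by
    intro y hy
    rcases lt_or_eq_of_le (mem_Iic.mp hy) with h | h
    · rw [(hev y h).deriv_eq, (hdΦ y).deriv]
    · subst h; exact hDxT.deriv
  have hdR : ∀ y ∈ Ici T, deriv xbar y = psi1 m T y • w := by
    intro y hy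
    rcases lt_or_eq_of_le (mem_Ici.mp hy) with h | h
    · rw [(hevΨ y h).deriv_eq, (hdΨ y).deriv]
    · rw [← h, hDxT.deriv, hpsi1T]
  -- second derivative of xbar at T
  have hD2T : HasDerivAt (deriv xbar) (phi2 m T T • w) T := by
    have hL : HasDerivWithinAt (deriv xbar) (phi2 m T T • w) (Iic T) T :=
      ((hphi1 m T hm' T).smul_const w).hasDerivWithinAt.congr hdL (hdL T (mem_Iic.mpr le_rfl))
    have hR : HasDerivWithinAt (deriv xbar) (phi2 m T T • w) (Ici T) T := by
      have := ((hpsi1 m T hm' T).smul_const w).hasDerivWithinAt.congr hdR (hdR T (mem_Ici.mpr le_rfl))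
      rwa [hpsi2T] at this
    have := hL.union hR
    rwa [Iic_union_Ici, hasDerivWithinAt_univ] at this
  have hi2T : iteratedDeriv 2 xbar T = phi2 m T T • w := by
    show iteratedDeriv (1+1) xbar T = _
    rw [iteratedDeriv_succ, iteratedDeriv_one]
    exact hD2T.deriv
  -- exp values at 0 and T
  have hexp0 : Real.exp (-(0:ℝ)/m) = 1 := by norm_num
  have hexpT0 : Real.exp (((0:ℝ)-T)/m) = A := by rw [hA, zero_sub]
  refine ⟨by rw [hKval], by rw [hKval]; exact hKpos, ?_, ?_, ?_, ?_, ?_, ?_⟩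
  · -- smoothness
    have hsm : ContDiff ℝ (⊤ : ℕ∞) Φ :=
      contDiff_const.add ((phi_contDiff m T A hm').smul contDiff_const)
    exact hsm.contDiffOn.congr (fun t ht => hxΦ t (mem_Iic.mpr ht.2))
  · -- ODE on (0,T)
    intro t ht
    rw [hi 4 t ht.2, hi 2 t ht.2, hiter4Φ, hiter2Φ]
    simp only [smul_smul]
    rw [← add_smul]
    convert zero_smul ℝ w using 2
    unfold phi4 phi2
    field_simp
    ring
  · -- xbar 0 = xminus
    rw [hxw 0, hCphi 0 (mem_Iic.mpr (le_of_lt hT))]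
    have : phi m T A 0 = 0 := by
      unfold phi; rw [hexp0, hexpT0]; ring
    rw [this, zero_smul, add_zero]
  · -- xbar T = xplus
    rw [hxw T, hKval, hw, smul_smul, mul_inv_cancel₀ hKne, one_smul, hv]
    abel
  · -- m x''(0) = x'(0)
    rw [hi 2 0 hT, hiter2Φ, hdL 0 (le_of_lt hT), smul_smul]
    congr 1
    unfold phi2 phi1
    rw [hexp0, hexpT0]
    field_simp
    ring
  · -- m x''(T) = -x'(T)
    rw [hi2T, hDxT.deriv, smul_smul, ← neg_smul]
    congr 1
    unfold phi2 phi1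
    field_simp
    rw [show T * (1 - 1) / m = 0 by ring, Real.exp_zero]
    ring
end
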